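/- arXiv:0906.2185 — 6 statements merged into one kernel-verified Lean document; each statement's English description precedes it below -/
import Mathlib

section
/- For every Schwartz function φ : ℝ → ℝ, every x ∈ ℝ, and every α with 0 < α < 1, the Liouville-Weyl fractional derivative in its original form equals its regularized integral form: (1/Γ(1-α)) · d/dx ∫_{-∞}^{x} (x-ξ)^{-α} φ(ξ) dξ = (α/Γ(1-α)) ∫_{0}^{∞} (φ(x) - φ(x-ξ)) ξ^{-(α+1)} dξ. -/
open MeasureTheory Real Set Filter Topology

/-- Uniform and quadratic-decay bounds for a Schwartz function. -/
private lemma schwartz_bounds (f : SchwartzMap ℝ ℝ) :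
    ∃ C : ℝ, 0 < C ∧ (∀ w : ℝ, |f w| ≤ C) ∧ ∀ w : ℝ, w ^ 2 * |f w| ≤ C := by
  obtain ⟨C0, hC0, h0⟩ := f.decay 0 0
  obtain ⟨C2, hC2, h2⟩ := f.decay 2 0
  refine ⟨max C0 C2, lt_max_of_lt_left hC0, fun w => ?_, fun w => ?_⟩
  · have := h0 w
    simp only [pow_zero, one_mul, norm_iteratedFDeriv_zero] at this
    exact le_trans (by simpa using this) (le_max_left _ _)
  · have := h2 w
    simp only [norm_iteratedFDeriv_zero, Real.norm_eq_abs] at this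
    calc w ^ 2 * |f w| = |w| ^ 2 * |f w| := by rw [sq_abs]
    _ ≤ C2 := this
    _ ≤ max C0 C2 := le_max_right _ _

/-- A dominating function for `t ↦ t ^ (-α) * f (z - t)` uniformly for `z` near `x`. -/
private lemma exists_dominating (α : ℝ) (hα0 : 0 < α) (hα1 : α < 1) (f : SchwartzMap ℝ ℝ)
    (x : ℝ) :
    ∃ bound : ℝ → ℝ, IntegrableOn bound (Ioi (0:ℝ)) ∧
      ∀ t ∈ Ioi (0:ℝ), ∀ z ∈ Metric.ball x 1, ‖t ^ (-α) * f (z - t)‖ ≤ bound t := by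
  obtain ⟨C, hCpos, hC0, hC2⟩ := schwartz_bounds f
  set R : ℝ := 2 * |x| + 4 with hR
  have hRpos : 0 < R := by positivity
  refine ⟨fun t => if t ≤ R then C * t ^ (-α) else (4 * C) * t ^ (-2 : ℝ), ?_, ?_⟩
  · have h1 : IntegrableOn (fun t => if t ≤ R then C * t ^ (-α) else (4 * C) * t ^ (-2 : ℝ))
        (Ioc (0:ℝ) R) := by
      have base : IntegrableOn (fun t : ℝ => t ^ (-α)) (Ioc (0:ℝ) R) :=
        (intervalIntegrable_iff_integrableOn_Ioc_of_le hRpos.le).mp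
          (intervalIntegral.intervalIntegrable_rpow' (by linarith))
      refine IntegrableOn.congr_fun (base.const_mul C) ?_ measurableSet_Ioc
      intro t ht
      simp [ht.2]
    have h2 : IntegrableOn (fun t => if t ≤ R then C * t ^ (-α) else (4 * C) * t ^ (-2 : ℝ))
        (Ioi R) := by
      have base : IntegrableOn (fun t : ℝ => t ^ (-2:ℝ)) (Ioi R) :=
        integrableOn_Ioi_rpow_of_lt (by norm_num) hRpos
      refine IntegrableOn.congr_fun (base.const_mul (4 * C)) ?_ measurableSet_Ioi
      intro t ht
      simp [not_le.mpr (mem_Ioi.mp ht)]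
    have := h1.union h2
    rwa [Ioc_union_Ioi_eq_Ioi hRpos.le] at this
  · intro t ht z hz
    have htpos : 0 < t := mem_Ioi.mp ht
    have hrpow : 0 ≤ t ^ (-α) := Real.rpow_nonneg htpos.le _
    by_cases hcase : t ≤ R
    · simp only [if_pos hcase]
      have heq : ‖t ^ (-α) * f (z - t)‖ = t ^ (-α) * |f (z - t)| := by
        rw [norm_mul, Real.norm_eq_abs, Real.norm_eq_abs, abs_of_nonneg hrpow]
      rw [heq, mul_comm C]
      exact mul_le_mul_of_nonneg_left (hC0 _) hrpow
    · simp only [if_neg hcase]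
      push_neg at hcase
      have hz' : |z| < |x| + 1 := by
        have := abs_sub_abs_le_abs_sub z x
        have hd : |z - x| < 1 := by simpa [Real.dist_eq] using hz
        linarith
      have ht2 : t / 2 > |x| + 1 := by
        rw [hR] at hcase; linarith
      have hzt : t / 2 ≤ t - z := by
        have : z ≤ |z| := le_abs_self z
        linarith
      have hsq : t ^ 2 / 4 ≤ (z - t) ^ 2 := by
        have h1 : (t / 2) ^ 2 ≤ (t - z) ^ 2 := by
          apply sq_le_sq'
          · nlinarith
          · exact hzt
        have : (z - t) ^ 2 = (t - z) ^ 2 := by ring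
        rw [this]
        nlinarith
      have hfb : |f (z - t)| ≤ 4 * C / t ^ 2 := by
        have hne : (0:ℝ) < (z - t) ^ 2 := by nlinarith
        have h4 : |f (z - t)| ≤ C / (z - t) ^ 2 := by
          rw [le_div_iff₀ hne, mul_comm]
          exact hC2 (z - t)
        refine h4.trans ?_
        rw [div_le_div_iff₀ hne (by positivity : (0:ℝ) < t ^ 2)]
        nlinarith [mul_nonneg hCpos.le (sub_nonneg.mpr hsq)]
      have htα : t ^ (-α) ≤ 1 := by
        apply Real.rpow_le_one_of_one_le_of_nonpos
        · rw [hR] at hcase; linarith [abs_nonneg x]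
        · linarith
      have ht2' : t ^ (-2:ℝ) = (t ^ 2)⁻¹ := by
        rw [show (-2:ℝ) = -((2:ℕ):ℝ) by norm_num, Real.rpow_neg htpos.le, Real.rpow_natCast]
      rw [norm_mul, Real.norm_eq_abs, Real.norm_eq_abs, abs_of_nonneg hrpow, ht2']
      calc t ^ (-α) * |f (z - t)| ≤ 1 * (4 * C / t ^ 2) :=
            mul_le_mul htα hfb (abs_nonneg _) zero_le_one
      _ = 4 * C * (t ^ 2)⁻¹ := by ring

private lemma aesm_rpow_mul_schwartz (α : ℝ) (f : SchwartzMap ℝ ℝ) (y : ℝ) :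
    AEStronglyMeasurable (fun t : ℝ => t ^ (-α) * f (y - t))
      (volume.restrict (Ioi (0:ℝ))) := by
  apply Measurable.aestronglyMeasurable
  exact (measurable_id.pow_const _).mul
    (f.continuous.measurable.comp (measurable_const.sub measurable_id))

/-- Integrability of `t ↦ t ^ (-α) * f (y - t)` on `(0, ∞)`. -/
private lemma integrableOn_rpow_mul_schwartz (α : ℝ) (hα0 : 0 < α) (hα1 : α < 1)
    (f : SchwartzMap ℝ ℝ) (y : ℝ) :
    IntegrableOn (fun t : ℝ => t ^ (-α) * f (y - t)) (Ioi (0:ℝ)) := by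
  obtain ⟨bound, hbi, hb⟩ := exists_dominating α hα0 hα1 f y
  refine hbi.mono' (aesm_rpow_mul_schwartz α f y) ?_
  filter_upwards [ae_restrict_mem measurableSet_Ioi] with t ht
  exact hb t ht y (Metric.mem_ball_self one_pos)

/-- For every Schwartz function `φ`, every `x`, and every `0 < α < 1`, the Liouville-Weyl
fractional derivative `D_+^α φ(x) = (d/dx) I_+^{1-α} φ(x)` equals its regularized form. -/
theorem liouville_weyl_left_deriv_eq_regularized (φ : SchwartzMap ℝ ℝ) (x : ℝ) (α : ℝ)
    (hα0 : 0 < α) (hα1 : α < 1) :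
    deriv (fun y : ℝ => (1 / Real.Gamma (1 - α)) * ∫ ξ in Set.Iio y, (y - ξ) ^ (-α) * φ ξ) x
      = (α / Real.Gamma (1 - α)) *
        ∫ ξ in Set.Ioi (0 : ℝ), (φ x - φ (x - ξ)) * ξ ^ (-(α + 1)) := by
  set ψ : SchwartzMap ℝ ℝ := SchwartzMap.derivCLM ℝ ℝ φ with hψ
  have hψ_apply : ∀ w : ℝ, ψ w = deriv φ w := fun w => SchwartzMap.derivCLM_apply ℝ φ w
  obtain ⟨M0, hM0pos, hM0, -⟩ := schwartz_bounds φ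
  obtain ⟨M1, hM1pos, hM1, -⟩ := schwartz_bounds ψ
  -- Lipschitz bound for φ
  have hLip : ∀ s t : ℝ, |φ s - φ t| ≤ M1 * |s - t| := by
    have hl : LipschitzWith ⟨M1, hM1pos.le⟩ φ := by
      apply lipschitzWith_of_nnnorm_deriv_le φ.differentiable
      intro w
      apply NNReal.coe_le_coe.mp
      exact (by simpa [← hψ_apply w] using hM1 w : ‖deriv φ w‖ ≤ M1)
    intro s t
    have := hl.dist_le_mul s t
    simpa [Real.dist_eq] using (show dist (φ s) (φ t) ≤ M1 * dist s t from this)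
  -- Step 1: change of variables
  have step1 : ∀ y : ℝ, (∫ ξ in Iio y, (y - ξ) ^ (-α) * φ ξ)
      = ∫ t in Ioi (0:ℝ), t ^ (-α) * φ (y - t) := by
    intro y
    have A : MeasurableEmbedding fun t : ℝ => y - t :=
      (MeasurableEquiv.subLeft y).measurableEmbedding
    have h := A.setIntegral_map (μ := volume) (fun ξ => (y - ξ) ^ (-α) * φ ξ) (Iio y)
    rw [Measure.map_sub_left_eq_self (volume : Measure ℝ) y] at h
    rw [h]
    have hpre : (fun t : ℝ => y - t) ⁻¹' Iio y = Ioi 0 := by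
      ext t; simp [sub_lt_iff_lt_add]
    rw [hpre]
    refine setIntegral_congr_fun measurableSet_Ioi (fun t _ => ?_)
    simp [sub_sub_cancel]
  -- Step 2: differentiation under the integral sign
  have step2 : HasDerivAt (fun y => ∫ t in Ioi (0:ℝ), t ^ (-α) * φ (y - t))
      (∫ t in Ioi (0:ℝ), t ^ (-α) * ψ (x - t)) x := by
    obtain ⟨bound, hbi, hb⟩ := exists_dominating α hα0 hα1 ψ x
    have := hasDerivAt_integral_of_dominated_loc_of_deriv_le (μ := volume.restrict (Ioi (0:ℝ)))
      (F := fun z t => t ^ (-α) * φ (z - t)) (F' := fun z t => t ^ (-α) * ψ (z - t))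
      (x₀ := x) (bound := bound) (Metric.ball_mem_nhds x one_pos)
      (Eventually.of_forall fun z => aesm_rpow_mul_schwartz α φ z)
      (integrableOn_rpow_mul_schwartz α hα0 hα1 φ x)
      (aesm_rpow_mul_schwartz α ψ x)
      ?_ hbi ?_
    · exact this.2
    · filter_upwards [ae_restrict_mem measurableSet_Ioi] with t ht z hz
      exact hb t ht z hz
    · filter_upwards [ae_restrict_mem measurableSet_Ioi] with t _ z _
      have h1 : HasDerivAt (fun z : ℝ => φ (z - t)) (deriv φ (z - t)) z := by
        have := (φ.differentiable.differentiableAt (x := z - t)).hasDerivAt.comp z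
          ((hasDerivAt_id z).sub_const t)
        exact this.congr_deriv (mul_one _)
      rw [hψ_apply]
      exact h1.const_mul _
  -- Step 3: integration by parts on (0, ∞)
  have hI2 : IntegrableOn (fun t : ℝ => ((-α) * t ^ (-α - 1)) * (φ x - φ (x - t)))
      (Ioi (0:ℝ)) := by
    have hmeas : AEStronglyMeasurable (fun t : ℝ => ((-α) * t ^ (-α - 1)) * (φ x - φ (x - t)))
        (volume.restrict (Ioi (0:ℝ))) := by
      apply Measurable.aestronglyMeasurable
      exact ((measurable_const.mul (measurable_id.pow_const _))).mul
        (measurable_const.sub (φ.continuous.measurable.comp (measurable_const.sub measurable_id)))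
    have h1 : IntegrableOn (fun t : ℝ => ((-α) * t ^ (-α - 1)) * (φ x - φ (x - t)))
        (Ioc (0:ℝ) 1) := by
      have base : IntegrableOn (fun t : ℝ => t ^ (-α)) (Ioc (0:ℝ) 1) :=
        (intervalIntegrable_iff_integrableOn_Ioc_of_le zero_le_one).mp
          (intervalIntegral.intervalIntegrable_rpow' (by linarith))
      refine (base.const_mul (α * M1)).mono' (hmeas.mono_set Ioc_subset_Ioi_self) ?_
      filter_upwards [ae_restrict_mem measurableSet_Ioc] with t ht
      have htpos : 0 < t := ht.1
      have hv : |φ x - φ (x - t)| ≤ M1 * t := by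
        have := hLip x (x - t)
        simpa [abs_of_pos htpos] using this
      have hrpow : 0 ≤ t ^ (-α - 1) := Real.rpow_nonneg htpos.le _
      rw [norm_mul, norm_mul, Real.norm_eq_abs, Real.norm_eq_abs, Real.norm_eq_abs,
        abs_of_nonneg hrpow, abs_neg, abs_of_pos hα0]
      calc α * t ^ (-α - 1) * |φ x - φ (x - t)| ≤ α * t ^ (-α - 1) * (M1 * t) := by
            apply mul_le_mul_of_nonneg_left hv (by positivity)
      _ = α * M1 * (t ^ (-α - 1) * t) := by ring
      _ = α * M1 * t ^ (-α) := by
            rw [← Real.rpow_add_one htpos.ne' (-α - 1)]; ring_nf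
    have h2 : IntegrableOn (fun t : ℝ => ((-α) * t ^ (-α - 1)) * (φ x - φ (x - t)))
        (Ioi (1:ℝ)) := by
      have base : IntegrableOn (fun t : ℝ => t ^ (-α - 1)) (Ioi (1:ℝ)) :=
        integrableOn_Ioi_rpow_of_lt (by linarith) one_pos
      refine (base.const_mul (α * (2 * M0))).mono' (hmeas.mono_set (Ioi_subset_Ioi zero_le_one)) ?_
      filter_upwards [ae_restrict_mem measurableSet_Ioi] with t ht
      have htpos : (0:ℝ) < t := lt_trans one_pos ht
      have hrpow : 0 ≤ t ^ (-α - 1) := Real.rpow_nonneg htpos.le _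
      have hv : |φ x - φ (x - t)| ≤ 2 * M0 := by
        calc |φ x - φ (x - t)| ≤ |φ x| + |φ (x - t)| := abs_sub _ _
        _ ≤ M0 + M0 := add_le_add (hM0 _) (hM0 _)
        _ = 2 * M0 := by ring
      rw [norm_mul, norm_mul, Real.norm_eq_abs, Real.norm_eq_abs, Real.norm_eq_abs,
        abs_of_nonneg hrpow, abs_neg, abs_of_pos hα0]
      calc α * t ^ (-α - 1) * |φ x - φ (x - t)| ≤ α * t ^ (-α - 1) * (2 * M0) := by
            apply mul_le_mul_of_nonneg_left hv (by positivity)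
      _ = α * (2 * M0) * t ^ (-α - 1) := by ring
    have := h1.union h2
    rwa [Ioc_union_Ioi_eq_Ioi zero_le_one] at this
  have step3 : (∫ t in Ioi (0:ℝ), t ^ (-α) * ψ (x - t))
      = α * ∫ t in Ioi (0:ℝ), (φ x - φ (x - t)) * t ^ (-(α + 1)) := by
    set u : ℝ → ℝ := fun t => t ^ (-α) with hu_def
    set u' : ℝ → ℝ := fun t => (-α) * t ^ (-α - 1) with hu'_def
    set v : ℝ → ℝ := fun t => φ x - φ (x - t) with hv_def
    set v' : ℝ → ℝ := fun t => ψ (x - t) with hv'_def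
    have hu : ∀ t ∈ Ioi (0:ℝ), HasDerivAt u (u' t) t := fun t ht =>
      Real.hasDerivAt_rpow_const (Or.inl (mem_Ioi.mp ht).ne')
    have hv : ∀ t ∈ Ioi (0:ℝ), HasDerivAt v (v' t) t := by
      intro t _
      have h1 : HasDerivAt (fun t : ℝ => φ (x - t)) (deriv φ (x - t) * (-1)) t :=
        (φ.differentiable.differentiableAt (x := x - t)).hasDerivAt.comp t
          ((hasDerivAt_id t).const_sub x)
      have h2 := h1.const_sub (φ x)
      simp only [hv_def, hv'_def, hψ_apply]
      refine h2.congr_deriv ?_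
      ring
    have huv' : IntegrableOn (u * v') (Ioi (0:ℝ)) := by
      have := integrableOn_rpow_mul_schwartz α hα0 hα1 ψ x
      exact this.congr_fun (fun t _ => rfl) measurableSet_Ioi
    have hu'v : IntegrableOn (u' * v) (Ioi (0:ℝ)) :=
      hI2.congr_fun (fun t _ => rfl) measurableSet_Ioi
    have h_zero : Tendsto (u * v) (𝓝[>] (0:ℝ)) (𝓝 0) := by
      apply squeeze_zero_norm'
      · filter_upwards [self_mem_nhdsWithin] with t (ht : (0:ℝ) < t)
        have hv1 : |v t| ≤ M1 * t := by
          have := hLip x (x - t)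
          simpa [hv_def, abs_of_pos ht] using this
        have hrpow : 0 ≤ t ^ (-α) := Real.rpow_nonneg ht.le _
        show ‖u t * v t‖ ≤ M1 * t ^ (1 - α)
        rw [norm_mul, Real.norm_eq_abs, Real.norm_eq_abs, abs_of_nonneg hrpow]
        calc t ^ (-α) * |v t| ≤ t ^ (-α) * (M1 * t) := by
              apply mul_le_mul_of_nonneg_left hv1 hrpow
        _ = M1 * (t ^ (-α) * t) := by ring
        _ = M1 * t ^ (1 - α) := by
              rw [← Real.rpow_add_one ht.ne' (-α)]; ring_nf
      · have hcont : ContinuousAt (fun t : ℝ => t ^ (1 - α)) 0 := by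
          apply Real.continuousAt_rpow_const
          right; linarith
        have h0 : Tendsto (fun t : ℝ => t ^ (1 - α)) (𝓝[>] (0:ℝ)) (𝓝 0) := by
          have h : Tendsto (fun t : ℝ => t ^ (1 - α)) (𝓝[>] (0:ℝ))
              (𝓝 ((0:ℝ) ^ (1 - α))) := hcont.continuousWithinAt
          rwa [Real.zero_rpow (by linarith : (1:ℝ) - α ≠ 0)] at h
        simpa using h0.const_mul M1
    have h_infty : Tendsto (u * v) atTop (𝓝 0) := by
      apply squeeze_zero_norm'
      · filter_upwards [eventually_gt_atTop (0:ℝ)] with t ht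
        have hrpow : 0 ≤ t ^ (-α) := Real.rpow_nonneg ht.le _
        have hv1 : |v t| ≤ 2 * M0 := by
          calc |v t| ≤ |φ x| + |φ (x - t)| := abs_sub _ _
          _ ≤ M0 + M0 := add_le_add (hM0 _) (hM0 _)
          _ = 2 * M0 := by ring
        show ‖u t * v t‖ ≤ 2 * M0 * t ^ (-α)
        rw [norm_mul, Real.norm_eq_abs, Real.norm_eq_abs, abs_of_nonneg hrpow]
        calc t ^ (-α) * |v t| ≤ t ^ (-α) * (2 * M0) := mul_le_mul_of_nonneg_left hv1 hrpow
        _ = 2 * M0 * t ^ (-α) := by ring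
      · simpa using (tendsto_rpow_neg_atTop hα0).const_mul (2 * M0)
    have ibp := integral_Ioi_mul_deriv_eq_deriv_mul hu hv huv' hu'v h_zero h_infty
    rw [ibp]
    have : (∫ t in Ioi (0:ℝ), u' t * v t)
        = (-α) * ∫ t in Ioi (0:ℝ), (φ x - φ (x - t)) * t ^ (-(α + 1)) := by
      rw [← integral_const_mul]
      refine setIntegral_congr_fun measurableSet_Ioi (fun t _ => ?_)
      show (-α) * t ^ (-α - 1) * v t = (-α) * ((φ x - φ (x - t)) * t ^ (-(α + 1)))
      have : (-α : ℝ) - 1 = -(α + 1) := by ring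
      rw [this, hv_def]
      ring
    rw [this]
    ring
  -- Assemble
  have funeq : (fun y : ℝ => (1 / Real.Gamma (1 - α)) * ∫ ξ in Iio y, (y - ξ) ^ (-α) * φ ξ)
      = fun y : ℝ => (1 / Real.Gamma (1 - α)) * ∫ t in Ioi (0:ℝ), t ^ (-α) * φ (y - t) := by
    funext y; rw [step1 y]
  rw [funeq]
  rw [(step2.const_mul (1 / Real.Gamma (1 - α))).deriv, step3]
  ring
end

section
/- For every Schwartz function φ : ℝ → ℝ, every x ∈ ℝ, and every α with 0 < α < 1, the right Liouville-Weyl fractional derivative in its original form equals its regularized integral form: -(1/Γ(1-α)) · d/dx ∫_{x}^{∞} (ξ-x)^{-α} φ(ξ) dξ = (α/Γ(1-α)) ∫_{0}^{∞} (φ(x) - φ(x+ξ)) ξ^{-(α+1)} dξ. -/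
open MeasureTheory Real Set Filter Topology

private lemma integrableOn_Ioi_of_bounds {h : ℝ → ℝ} {α A B : ℝ} (hα0 : 0 < α) (hα1 : α < 1)
    (hmeas : AEStronglyMeasurable h (volume.restrict (Set.Ioi 0)))
    (h1 : ∀ t ∈ Set.Ioc (0:ℝ) 1, ‖h t‖ ≤ A * t ^ (-α))
    (h2 : ∀ t ∈ Set.Ioi (1:ℝ), ‖h t‖ ≤ B * t ^ (-α - 1)) :
    IntegrableOn h (Set.Ioi 0) := by
  have hsplit : Set.Ioi (0:ℝ) = Set.Ioc 0 1 ∪ Set.Ioi 1 :=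
    (Set.Ioc_union_Ioi_eq_Ioi zero_le_one).symm
  rw [hsplit]
  apply MeasureTheory.IntegrableOn.union
  · have hg : IntegrableOn (fun t : ℝ => A * t ^ (-α)) (Set.Ioc 0 1) := by
      have h := intervalIntegral.intervalIntegrable_rpow' (a := 0) (b := 1) (r := -α)
        (by linarith)
      rw [intervalIntegrable_iff_integrableOn_Ioc_of_le zero_le_one] at h
      exact h.const_mul A
    refine Integrable.mono' hg
      (hmeas.mono_measure (Measure.restrict_mono Set.Ioc_subset_Ioi_self le_rfl)) ?_
    exact (ae_restrict_iff' measurableSet_Ioc).mpr (ae_of_all _ h1)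
  · have hg : IntegrableOn (fun t : ℝ => B * t ^ (-α - 1)) (Set.Ioi 1) :=
      (integrableOn_Ioi_rpow_of_lt (by linarith) one_pos).const_mul B
    refine Integrable.mono' hg
      (hmeas.mono_measure (Measure.restrict_mono (Set.Ioi_subset_Ioi zero_le_one) le_rfl)) ?_
    exact (ae_restrict_iff' measurableSet_Ioi).mpr (ae_of_all _ h2)

private lemma schwartz_decay_shift (f : SchwartzMap ℝ ℝ) (x : ℝ) :
    ∃ K : ℝ, 0 ≤ K ∧ ∀ y : ℝ, |y - x| ≤ 1 → ∀ t : ℝ, 0 ≤ t →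
      ‖f (y + t)‖ ≤ K / (1 + t) ^ 2 := by
  obtain ⟨C0, hC0⟩ := f.decay 0 0
  obtain ⟨C2, hC2⟩ := f.decay 2 0
  have hC0' : ∀ z : ℝ, ‖f z‖ ≤ C0 := by
    intro z; have := hC0.2 z; simpa using this
  have hC2' : ∀ z : ℝ, z ^ 2 * ‖f z‖ ≤ C2 := by
    intro z; have := hC2.2 z
    simpa [Real.norm_eq_abs, sq_abs] using this
  refine ⟨2 * (C0 + C2) * (2 + |x|) ^ 2, ?_, ?_⟩
  · have h0 : 0 ≤ C0 := le_trans (norm_nonneg _) (hC0' 0)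
    have h2 : 0 ≤ C2 := le_trans (by positivity) (hC2' 1)
    positivity
  · intro y hy t ht
    set z := y + t with hz
    have hb1 : (1 + z ^ 2) * ‖f z‖ ≤ C0 + C2 := by
      have := hC0' z; have := hC2' z; nlinarith [norm_nonneg (f z)]
    have hyx : |y| ≤ |x| + 1 := by
      have := abs_sub_abs_le_abs_sub y x; linarith
    have hzb : 1 + t ≤ (2 + |x|) * (1 + |z|) := by
      have h1 : t ≤ |z| + |y| := by
        have : |t| ≤ |z| + |y| := by
          have h' : t = z - y := by rw [hz]; ring
          rw [h']; exact abs_sub _ _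
        linarith [le_abs_self t]
      have h2 : 0 ≤ |z| := abs_nonneg z
      have h3 : 0 ≤ |x| := abs_nonneg x
      nlinarith
    have habs : |z| ^ 2 = z ^ 2 := sq_abs z
    have hpos : (0:ℝ) < (1 + t) ^ 2 := by positivity
    rw [le_div_iff₀ hpos]
    have hsq : (1 + t) ^ 2 ≤ ((2 + |x|) * (1 + |z|)) ^ 2 := by
      apply pow_le_pow_left₀ (by linarith) hzb
    have hq : (1 + |z|) ^ 2 * ‖f z‖ ≤ 2 * (C0 + C2) := by
      nlinarith [norm_nonneg (f z), sq_nonneg (1 - |z|)]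
    nlinarith [norm_nonneg (f z), abs_nonneg z, abs_nonneg x, sq_nonneg (2 + |x|),
      mul_nonneg (mul_nonneg (abs_nonneg x) (abs_nonneg x)) (norm_nonneg (f z))]

set_option maxHeartbeats 1000000 in
/-- For every Schwartz function `φ`, every `x`, and every `0 < α < 1`, the right Liouville-Weyl
fractional derivative `D_-^α φ(x) = -(d/dx) I_-^{1-α} φ(x)` equals its regularized form. -/
theorem liouville_weyl_right_deriv_eq_regularized (φ : SchwartzMap ℝ ℝ) (x : ℝ) (α : ℝ)
    (hα0 : 0 < α) (hα1 : α < 1) :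
    -deriv (fun y : ℝ => (1 / Real.Gamma (1 - α)) * ∫ ξ in Set.Ioi y, (ξ - y) ^ (-α) * φ ξ) x
      = (α / Real.Gamma (1 - α)) *
        ∫ ξ in Set.Ioi (0 : ℝ), (φ x - φ (x + ξ)) * ξ ^ (-(α + 1)) := by
  -- the derivative of φ as a Schwartz map
  set ψ : SchwartzMap ℝ ℝ := SchwartzMap.derivCLM ℝ ℝ φ with hψdef
  have hφ_diff : Differentiable ℝ (⇑φ) := φ.differentiable
  have hφ_deriv : ∀ z : ℝ, HasDerivAt (⇑φ) (ψ z) z := by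
    intro z
    have : ψ z = deriv (⇑φ) z := SchwartzMap.derivCLM_apply ℝ φ z
    rw [this]
    exact (hφ_diff z).hasDerivAt
  -- decay constants
  obtain ⟨Kφ, hKφ0, hKφ⟩ := schwartz_decay_shift φ x
  obtain ⟨Kψ, hKψ0, hKψ⟩ := schwartz_decay_shift ψ x
  obtain ⟨C0, hC0⟩ : ∃ C, ∀ z : ℝ, ‖φ z‖ ≤ C := by
    obtain ⟨C, hC⟩ := φ.decay 0 0; exact ⟨C, fun z => by simpa using hC.2 z⟩
  obtain ⟨C1, hC1⟩ : ∃ C, ∀ z : ℝ, ‖ψ z‖ ≤ C := by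
    obtain ⟨C, hC⟩ := ψ.decay 0 0; exact ⟨C, fun z => by simpa using hC.2 z⟩
  have hC0nn : 0 ≤ C0 := le_trans (norm_nonneg _) (hC0 0)
  have hC1nn : 0 ≤ C1 := le_trans (norm_nonneg _) (hC1 0)
  -- Lipschitz bound
  have hLip : ∀ a b : ℝ, ‖φ b - φ a‖ ≤ C1 * ‖b - a‖ := by
    intro a b
    refine convex_univ.norm_image_sub_le_of_norm_deriv_le
      (fun z _ => hφ_diff z) (fun z _ => ?_) (Set.mem_univ a) (Set.mem_univ b)
    have : deriv (⇑φ) z = ψ z := (SchwartzMap.derivCLM_apply ℝ φ z).symm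
    rw [this]; exact hC1 z
  -- continuity of rpow on Ioi 0
  have hrpow_cont : ∀ β : ℝ, ContinuousOn (fun t : ℝ => t ^ β) (Set.Ioi 0) := by
    intro β t ht
    exact (Real.continuousAt_rpow_const t β (Or.inl (ne_of_gt ht))).continuousWithinAt
  -- measurability helpers
  have hmeas1 : ∀ (g : ℝ → ℝ), Continuous g → ∀ β : ℝ,
      AEStronglyMeasurable (fun t : ℝ => t ^ β * g t) (volume.restrict (Set.Ioi 0)) := by
    intro g hg β
    exact (((hrpow_cont β).mul hg.continuousOn).aestronglyMeasurable measurableSet_Ioi)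
  -- change of variables
  have hA : ∀ y : ℝ, (∫ ξ in Set.Ioi y, (ξ - y) ^ (-α) * φ ξ)
      = ∫ t in Set.Ioi (0:ℝ), t ^ (-α) * φ (y + t) := by
    intro y
    have key : ∀ t : ℝ, ((Set.Ioi (0:ℝ)).indicator (fun t => t ^ (-α) * φ (y + t))) t
        = ((Set.Ioi y).indicator (fun ξ => (ξ - y) ^ (-α) * φ ξ)) (y + t) := by
      intro t
      by_cases ht : t ∈ Set.Ioi (0:ℝ)
      · rw [Set.indicator_of_mem ht, Set.indicator_of_mem (by simpa using ht)]
        simp [add_sub_cancel_left]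
      · rw [Set.indicator_of_notMem ht, Set.indicator_of_notMem]
        simp only [Set.mem_Ioi, not_lt] at ht ⊢
        linarith
    rw [← integral_indicator measurableSet_Ioi, ← integral_indicator measurableSet_Ioi]
    simp_rw [key]
    exact (integral_add_left_eq_self (μ := volume)
      ((Set.Ioi y).indicator (fun ξ : ℝ => (ξ - y) ^ (-α) * φ ξ) : ℝ → ℝ) y).symm
  -- integrability of the dominating bound
  have hbound_int : ∀ K : ℝ, 0 ≤ K →
      IntegrableOn (fun t : ℝ => t ^ (-α) * (K / (1 + t) ^ 2)) (Set.Ioi 0) := by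
    intro K hK
    refine integrableOn_Ioi_of_bounds hα0 hα1 ?_ ?_ ?_ (A := K) (B := K)
    · refine (((hrpow_cont (-α)).mul ?_).aestronglyMeasurable measurableSet_Ioi)
      exact ContinuousOn.div continuousOn_const (by fun_prop)
        (fun t ht => by have h : (0:ℝ) < t := ht; positivity)
    · intro t ht
      have h1 : (0:ℝ) < t := ht.1
      have h2 : (0:ℝ) < (1 + t) ^ 2 := by positivity
      have h3 : K / (1 + t) ^ 2 ≤ K := by
        apply div_le_self hK; nlinarith
      rw [Real.norm_eq_abs, abs_of_nonneg (by positivity)]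
      have := Real.rpow_nonneg h1.le (-α)
      calc t ^ (-α) * (K / (1 + t) ^ 2) ≤ t ^ (-α) * K := by
            apply mul_le_mul_of_nonneg_left h3 this
        _ = K * t ^ (-α) := by ring
    · intro t ht
      have h1 : (1:ℝ) < t := ht
      have h0 : (0:ℝ) < t := lt_trans one_pos h1
      rw [Real.norm_eq_abs, abs_of_nonneg (by positivity)]
      have hle : K / (1 + t) ^ 2 ≤ K * t⁻¹ := by
        rw [div_le_iff₀ (by positivity)]
        have : t ≤ (1 + t) ^ 2 := by nlinarith
        calc K = K * (t⁻¹ * t) := by field_simp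
          _ ≤ K * t⁻¹ * (1 + t) ^ 2 := by
              rw [mul_assoc]
              apply mul_le_mul_of_nonneg_left _ hK
              apply mul_le_mul_of_nonneg_left this (by positivity)
      calc t ^ (-α) * (K / (1 + t) ^ 2) ≤ t ^ (-α) * (K * t⁻¹) := by
            apply mul_le_mul_of_nonneg_left hle (Real.rpow_nonneg h0.le _)
        _ = K * (t ^ (-α) * t ^ (-1:ℝ)) := by rw [Real.rpow_neg_one]; ring
        _ = K * t ^ (-α - 1) := by rw [← Real.rpow_add h0]; ring_nf
  -- differentiation under the integral sign
  have key : IntegrableOn (fun t : ℝ => t ^ (-α) * ψ (x + t)) (Set.Ioi 0) ∧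
      HasDerivAt (fun y : ℝ => ∫ t in Set.Ioi (0:ℝ), t ^ (-α) * φ (y + t))
        (∫ t in Set.Ioi (0:ℝ), t ^ (-α) * ψ (x + t)) x := by
    apply hasDerivAt_integral_of_dominated_loc_of_deriv_le (s := Metric.ball x 1) (Metric.ball_mem_nhds x one_pos)
      (F := fun (y : ℝ) (t : ℝ) => t ^ (-α) * φ (y + t))
      (F' := fun (y : ℝ) (t : ℝ) => t ^ (-α) * ψ (y + t))
      (bound := fun t => t ^ (-α) * (Kψ / (1 + t) ^ 2))
    · filter_upwards with y
      exact hmeas1 (fun t => φ (y + t)) (φ.continuous.comp (continuous_const.add continuous_id)) (-α)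
    · -- integrability of F x
      refine integrableOn_Ioi_of_bounds hα0 hα1
        (hmeas1 (fun t => φ (x + t)) (φ.continuous.comp (continuous_const.add continuous_id)) (-α)) ?_ ?_
        (A := Kφ) (B := Kφ)
      · intro t ht
        have ht0 : (0:ℝ) < t := ht.1
        have hb := hKφ x (by simp) t ht0.le
        rw [Real.norm_eq_abs, abs_mul, abs_of_nonneg (Real.rpow_nonneg ht0.le _)]
        have hbb : t ^ (-α) * |φ (x + t)| ≤ t ^ (-α) * (Kφ / (1 + t) ^ 2) :=
          mul_le_mul_of_nonneg_left hb (Real.rpow_nonneg ht0.le _)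
        refine le_trans hbb ?_
        have h3 : Kφ / (1 + t) ^ 2 ≤ Kφ := by apply div_le_self hKφ0; nlinarith
        calc t ^ (-α) * (Kφ / (1 + t) ^ 2) ≤ t ^ (-α) * Kφ :=
              mul_le_mul_of_nonneg_left h3 (Real.rpow_nonneg ht0.le _)
          _ = Kφ * t ^ (-α) := by ring
      · intro t ht
        have h1 : (1:ℝ) < t := ht
        have ht0 : (0:ℝ) < t := lt_trans one_pos h1
        have hb := hKφ x (by simp) t ht0.le
        rw [Real.norm_eq_abs, abs_mul, abs_of_nonneg (Real.rpow_nonneg ht0.le _)]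
        have hbb : t ^ (-α) * |φ (x + t)| ≤ t ^ (-α) * (Kφ / (1 + t) ^ 2) :=
          mul_le_mul_of_nonneg_left hb (Real.rpow_nonneg ht0.le _)
        refine le_trans hbb ?_
        have hle : Kφ / (1 + t) ^ 2 ≤ Kφ * t⁻¹ := by
          rw [div_le_iff₀ (by positivity)]
          have hq : t ≤ (1 + t) ^ 2 := by nlinarith
          calc Kφ = Kφ * (t⁻¹ * t) := by field_simp
            _ ≤ Kφ * t⁻¹ * (1 + t) ^ 2 := by
                rw [mul_assoc]
                apply mul_le_mul_of_nonneg_left _ hKφ0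
                apply mul_le_mul_of_nonneg_left hq (by positivity)
        calc t ^ (-α) * (Kφ / (1 + t) ^ 2) ≤ t ^ (-α) * (Kφ * t⁻¹) :=
              mul_le_mul_of_nonneg_left hle (Real.rpow_nonneg ht0.le _)
          _ = Kφ * (t ^ (-α) * t ^ (-1:ℝ)) := by rw [Real.rpow_neg_one]; ring
          _ = Kφ * t ^ (-α - 1) := by rw [← Real.rpow_add ht0]; ring_nf
    · exact hmeas1 (fun t => ψ (x + t)) (ψ.continuous.comp (continuous_const.add continuous_id)) (-α)
    · -- bound
      refine (ae_restrict_iff' measurableSet_Ioi).mpr (ae_of_all _ ?_)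
      intro t ht y hy
      have ht0 : (0:ℝ) < t := ht
      have hy1 : |y - x| ≤ 1 := by
        rw [Metric.mem_ball, Real.dist_eq] at hy
        exact hy.le
      have hb := hKψ y hy1 t ht0.le
      rw [Real.norm_eq_abs, abs_mul, abs_of_nonneg (Real.rpow_nonneg ht0.le _)]
      exact mul_le_mul_of_nonneg_left hb (Real.rpow_nonneg ht0.le _)
    · exact hbound_int Kψ hKψ0
    · -- differentiability in y
      refine (ae_restrict_iff' measurableSet_Ioi).mpr (ae_of_all _ ?_)
      intro t _ y _
      have h1 : HasDerivAt (fun y : ℝ => φ (y + t)) (ψ (y + t)) y := by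
        have := (hφ_deriv (y + t)).comp y ((hasDerivAt_id y).add_const t)
        exact this.congr_deriv (by simp)
      simpa using h1.const_mul (t ^ (-α))
  -- rewrite the left-hand side
  have hfun : (fun y : ℝ => (1 / Real.Gamma (1 - α)) * ∫ ξ in Set.Ioi y, (ξ - y) ^ (-α) * φ ξ)
      = fun y : ℝ => (1 / Real.Gamma (1 - α)) * ∫ t in Set.Ioi (0:ℝ), t ^ (-α) * φ (y + t) := by
    funext y; rw [hA y]
  rw [hfun]
  have hder : HasDerivAt
      (fun y : ℝ => (1 / Real.Gamma (1 - α)) * ∫ t in Set.Ioi (0:ℝ), t ^ (-α) * φ (y + t))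
      ((1 / Real.Gamma (1 - α)) * ∫ t in Set.Ioi (0:ℝ), t ^ (-α) * ψ (x + t)) x :=
    key.2.const_mul _
  rw [hder.deriv]
  -- integration by parts
  set H : ℝ → ℝ := fun t => t ^ (-α) * (φ x - φ (x + t)) with hHdef
  set H' : ℝ → ℝ := fun t =>
    -α * ((φ x - φ (x + t)) * t ^ (-(α + 1))) - t ^ (-α) * ψ (x + t) with hH'def
  have hH0 : H 0 = 0 := by simp [hHdef]
  have hHderiv : ∀ t ∈ Set.Ioi (0:ℝ), HasDerivAt H (H' t) t := by
    intro t ht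
    have ht0 : (0:ℝ) < t := ht
    have h1 : HasDerivAt (fun t : ℝ => t ^ (-α)) (-α * t ^ (-α - 1)) t :=
      Real.hasDerivAt_rpow_const (Or.inl (ne_of_gt ht0))
    have h2 : HasDerivAt (fun t : ℝ => φ x - φ (x + t)) (-(ψ (x + t))) t := by
      have h3 : HasDerivAt (fun t : ℝ => φ (x + t)) (ψ (x + t)) t := by
        have := (hφ_deriv (x + t)).comp t ((hasDerivAt_id t).const_add x)
        exact this.congr_deriv (by simp)
      exact ((hasDerivAt_const t (φ x)).sub h3).congr_deriv (by simp)
    have := h1.mul h2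
    refine this.congr_deriv ?_
    rw [hH'def]
    have : -(α + 1) = -α - 1 := by ring
    rw [this]
    ring
  have hI1 : IntegrableOn (fun t : ℝ => (φ x - φ (x + t)) * t ^ (-(α + 1))) (Set.Ioi 0) := by
    have hneg : -(α + 1) = -α - 1 := by ring
    refine integrableOn_Ioi_of_bounds hα0 hα1 ?_ ?_ ?_ (A := C1) (B := 2 * C0)
    · have : ∀ t ∈ Set.Ioi (0:ℝ), (φ x - φ (x + t)) * t ^ (-(α + 1))
          = t ^ (-(α+1)) * (φ x - φ (x + t)) := fun t _ => by ring
      refine AEStronglyMeasurable.congr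
        (hmeas1 (fun t => φ x - φ (x + t))
          (continuous_const.sub (φ.continuous.comp (continuous_const.add continuous_id))) (-(α+1))) ?_
      refine (ae_restrict_iff' measurableSet_Ioi).mpr (ae_of_all _ ?_)
      intro t ht
      simpa using (this t ht).symm
    · intro t ht
      have ht0 : (0:ℝ) < t := ht.1
      rw [Real.norm_eq_abs, abs_mul, abs_of_nonneg (Real.rpow_nonneg ht0.le _)]
      have hl : |φ x - φ (x + t)| ≤ C1 * t := by
        have := hLip (x + t) x
        simpa [Real.norm_eq_abs, abs_of_nonneg ht0.le] using this
      calc |φ x - φ (x + t)| * t ^ (-(α + 1)) ≤ (C1 * t) * t ^ (-(α + 1)) :=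
            mul_le_mul_of_nonneg_right hl (Real.rpow_nonneg ht0.le _)
        _ = C1 * (t ^ (1:ℝ) * t ^ (-(α + 1))) := by rw [Real.rpow_one]; ring
        _ = C1 * t ^ (-α) := by rw [← Real.rpow_add ht0]; norm_num
    · intro t ht
      have ht0 : (0:ℝ) < t := lt_trans one_pos ht
      rw [Real.norm_eq_abs, abs_mul, abs_of_nonneg (Real.rpow_nonneg ht0.le _)]
      have hb : |φ x - φ (x + t)| ≤ 2 * C0 := by
        have := abs_sub (φ x) (φ (x + t))
        have h1 := hC0 x; have h2 := hC0 (x + t)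
        rw [Real.norm_eq_abs] at h1 h2
        calc |φ x - φ (x + t)| ≤ |φ x| + |φ (x + t)| := abs_sub _ _
          _ ≤ 2 * C0 := by linarith
      have heq : -(α + 1) = -α - 1 := by ring
      rw [heq]
      exact mul_le_mul_of_nonneg_right hb (Real.rpow_nonneg ht0.le _)
  have hI2 : IntegrableOn (fun t : ℝ => t ^ (-α) * ψ (x + t)) (Set.Ioi 0) := key.1
  have hH'int : IntegrableOn H' (Set.Ioi 0) := by
    rw [hH'def]
    exact (hI1.const_mul (-α)).sub hI2
  have hHcont : ContinuousWithinAt H (Set.Ici 0) 0 := by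
    show Tendsto H (𝓝[Set.Ici (0:ℝ)] 0) (𝓝 (H 0))
    rw [hH0]
    apply squeeze_zero_norm' (a := fun t => C1 * t ^ (1 - α))
    · filter_upwards [self_mem_nhdsWithin] with t ht
      rcases eq_or_lt_of_le (Set.mem_Ici.mp ht) with h | h
      · rw [← h, hH0]
        simp [Real.zero_rpow (show (1:ℝ) - α ≠ 0 by intro hc; nlinarith)]
      · have ht0 : (0:ℝ) < t := h
        rw [hHdef]
        simp only [Real.norm_eq_abs, abs_mul, abs_of_nonneg (Real.rpow_nonneg ht0.le (-α))]
        have hl : |φ x - φ (x + t)| ≤ C1 * t := by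
          have := hLip (x + t) x
          simpa [Real.norm_eq_abs, abs_of_nonneg ht0.le] using this
        calc t ^ (-α) * |φ x - φ (x + t)| ≤ t ^ (-α) * (C1 * t) :=
              mul_le_mul_of_nonneg_left hl (Real.rpow_nonneg ht0.le _)
          _ = C1 * (t ^ (-α) * t ^ (1:ℝ)) := by rw [Real.rpow_one]; ring
          _ = C1 * t ^ (1 - α) := by rw [← Real.rpow_add ht0, show -α + (1:ℝ) = 1 - α by ring]
    · have hc : ContinuousAt (fun t : ℝ => C1 * t ^ (1 - α)) 0 :=
        (continuousAt_const).mul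
          (Real.continuousAt_rpow_const 0 (1 - α) (Or.inr (by linarith)))
      have h2 : Tendsto (fun t : ℝ => C1 * t ^ (1 - α)) (𝓝[Set.Ici (0:ℝ)] 0)
          (𝓝 (C1 * (0:ℝ) ^ ((1:ℝ) - α))) := (hc.continuousWithinAt (s := Set.Ici (0:ℝ)))
      simpa [Real.zero_rpow (show (1:ℝ) - α ≠ 0 by intro h; nlinarith)] using h2
  have hHtop : Tendsto H atTop (𝓝 0) := by
    apply squeeze_zero_norm' (a := fun t => 2 * C0 * t ^ (-α))
    · filter_upwards [Filter.eventually_gt_atTop (0:ℝ)] with t ht0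
      rw [hHdef]
      simp only [Real.norm_eq_abs, abs_mul, abs_of_nonneg (Real.rpow_nonneg ht0.le (-α))]
      have hb : |φ x - φ (x + t)| ≤ 2 * C0 := by
        have h1 := hC0 x; have h2 := hC0 (x + t)
        rw [Real.norm_eq_abs] at h1 h2
        calc |φ x - φ (x + t)| ≤ |φ x| + |φ (x + t)| := abs_sub _ _
          _ ≤ 2 * C0 := by linarith
      calc t ^ (-α) * |φ x - φ (x + t)| ≤ t ^ (-α) * (2 * C0) :=
            mul_le_mul_of_nonneg_left hb (Real.rpow_nonneg ht0.le _)
        _ = 2 * C0 * t ^ (-α) := by ring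
    · have := (tendsto_rpow_neg_atTop hα0).const_mul (2 * C0)
      simpa using this
  have hIBP : ∫ t in Set.Ioi (0:ℝ), H' t = 0 - H 0 :=
    integral_Ioi_of_hasDerivAt_of_tendsto hHcont hHderiv hH'int hHtop
  rw [hH0, sub_zero] at hIBP
  -- split the integral
  have hsplit : ∫ t in Set.Ioi (0:ℝ), H' t
      = -α * (∫ t in Set.Ioi (0:ℝ), (φ x - φ (x + t)) * t ^ (-(α + 1)))
        - ∫ t in Set.Ioi (0:ℝ), t ^ (-α) * ψ (x + t) := by
    rw [hH'def]
    rw [integral_sub (hI1.const_mul (-α)) hI2, integral_const_mul]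
  rw [hsplit] at hIBP
  -- conclude
  have hrel : (∫ t in Set.Ioi (0:ℝ), t ^ (-α) * ψ (x + t))
      = -α * ∫ t in Set.Ioi (0:ℝ), (φ x - φ (x + t)) * t ^ (-(α + 1)) := by linarith
  rw [hrel]
  ring
end

section
/- For every Schwartz function φ : ℝ → ℝ, every x ∈ ℝ, and every α with 0 < α < 1, the left Liouville-Weyl fractional derivative is a left inverse of the left Liouville-Weyl fractional integral: (d/dx) I_+^{1-α} (I_+^{α} φ)(x) = φ(x). -/
open MeasureTheory Real

lemma beta_real {α : ℝ} (hα0 : 0 < α) (hα1 : α < 1) :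
    ∫ t in (0:ℝ)..1, t ^ (α - 1) * (1 - t) ^ (-α) = Real.Gamma α * Real.Gamma (1 - α) := by
  have h1 : (0:ℝ) < 1 - α := by linarith
  have hc := Complex.Gamma_mul_Gamma_eq_betaIntegral (s := (α:ℂ)) (t := ((1-α:ℝ):ℂ))
    (by simpa using hα0) (by simpa using h1)
  have hsum : (α:ℂ) + ((1-α:ℝ):ℂ) = 1 := by push_cast; ring
  rw [hsum, Complex.Gamma_one, one_mul] at hc
  have hmain : Complex.betaIntegral (α:ℂ) ((1-α:ℝ):ℂ)
      = ((∫ t in (0:ℝ)..1, t ^ (α - 1) * (1 - t) ^ (-α) : ℝ) : ℂ) := by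
    rw [Complex.betaIntegral, ← intervalIntegral.integral_ofReal]
    refine intervalIntegral.integral_congr fun t ht => ?_
    rw [Set.uIcc_of_le (by norm_num)] at ht
    obtain ⟨ht0, ht1⟩ := ht
    push_cast
    rw [Complex.ofReal_cpow ht0, Complex.ofReal_cpow (by linarith : (0:ℝ) ≤ 1 - t)]
    push_cast
    ring_nf
  rw [hmain, Complex.Gamma_ofReal, Complex.Gamma_ofReal, ← Complex.ofReal_mul] at hc
  exact_mod_cast hc.symm

lemma beta_kernel_integrable {α : ℝ} (hα0 : 0 < α) (hα1 : α < 1) :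
    IntervalIntegrable (fun t : ℝ => t ^ (α - 1) * (1 - t) ^ (-α)) volume 0 1 := by
  have h2 : IntervalIntegrable (fun t : ℝ => t ^ (α - 1)) volume 0 (1/2) :=
    intervalIntegral.intervalIntegrable_rpow' (by linarith)
  have h3 : IntervalIntegrable (fun t : ℝ => (1 - t) ^ (-α)) volume (1/2) 1 := by
    have : IntervalIntegrable (fun t : ℝ => t ^ (-α)) volume (1/2) 0 :=
      (intervalIntegral.intervalIntegrable_rpow' (by linarith)).symm
    have h := this.comp_sub_left 1
    norm_num at h
    exact h
  apply IntervalIntegrable.trans (b := 1/2)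
  · refine h2.mul_continuousOn ?_
    refine ContinuousOn.rpow_const (by fun_prop) ?_
    intro t ht
    rw [Set.uIcc_of_le (by norm_num)] at ht
    left; intro h; linarith [ht.2, h]
  · refine h3.continuousOn_mul ?_
    refine ContinuousOn.rpow_const (by fun_prop) ?_
    intro t ht
    rw [Set.uIcc_of_le (by norm_num)] at ht
    left; intro h; rw [h] at ht; linarith [ht.1]

lemma kernel_eq {α η y : ℝ} (h : η < y) {ξ : ℝ} (h1 : η ≤ ξ) (h2 : ξ ≤ y) :
    (y - ξ) ^ (-α) * (ξ - η) ^ (α - 1)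
      = (y - η)⁻¹ * (((y - η)⁻¹ * (ξ - η)) ^ (α - 1) * (1 - (y - η)⁻¹ * (ξ - η)) ^ (-α)) := by
  have hc : (0:ℝ) < y - η := by linarith
  have hci : (0:ℝ) < (y - η)⁻¹ := inv_pos.mpr hc
  have e1 : 1 - (y - η)⁻¹ * (ξ - η) = (y - η)⁻¹ * (y - ξ) := by field_simp; ring
  rw [e1, Real.mul_rpow hci.le (by linarith), Real.mul_rpow hci.le (by linarith)]
  have e2 : (y - η)⁻¹ ^ (α - 1) * (y - η)⁻¹ ^ (-α) = y - η := by
    rw [← Real.rpow_add hci, show α - 1 + -α = (-1:ℝ) by ring, Real.rpow_neg_one, inv_inv]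
  have e3 : (y-η)⁻¹ * ((y-η)⁻¹ ^ (α-1) * (ξ-η) ^ (α-1) * ((y-η)⁻¹ ^ (-α) * (y-ξ) ^ (-α)))
      = ((y-η)⁻¹ * ((y-η)⁻¹ ^ (α-1) * (y-η)⁻¹ ^ (-α))) * ((ξ-η) ^ (α-1) * (y-ξ) ^ (-α)) := by
    ring
  rw [e3, e2, inv_mul_cancel₀ hc.ne', one_mul]
  ring

lemma kernel_intInt {α η y : ℝ} (hα0 : 0 < α) (hα1 : α < 1) (h : η < y) :
    IntervalIntegrable (fun ξ : ℝ => (y - ξ) ^ (-α) * (ξ - η) ^ (α - 1)) volume η y := by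
  have h1 := (beta_kernel_integrable hα0 hα1).comp_mul_left (c := (y - η)⁻¹)
  rw [zero_div, one_div, inv_inv] at h1
  have h2 := (h1.comp_sub_right η).const_mul (y - η)⁻¹
  rw [zero_add, sub_add_cancel] at h2
  rw [intervalIntegrable_iff_integrableOn_Ioc_of_le h.le] at h2 ⊢
  refine h2.congr_fun (fun ξ hξ => ?_) measurableSet_Ioc
  exact (kernel_eq h hξ.1.le hξ.2).symm

lemma kernel_val {α η y : ℝ} (hα0 : 0 < α) (hα1 : α < 1) (h : η < y) :
    ∫ ξ in η..y, (y - ξ) ^ (-α) * (ξ - η) ^ (α - 1)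
      = Real.Gamma α * Real.Gamma (1 - α) := by
  have hc : (0:ℝ) < y - η := by linarith
  set g : ℝ → ℝ := fun t => t ^ (α - 1) * (1 - t) ^ (-α) with hg
  have e : ∫ ξ in η..y, (y - ξ) ^ (-α) * (ξ - η) ^ (α - 1)
      = ∫ ξ in η..y, (y - η)⁻¹ * g ((y - η)⁻¹ * (ξ - η)) := by
    refine intervalIntegral.integral_congr fun ξ hξ => ?_
    rw [Set.uIcc_of_le h.le] at hξ
    exact kernel_eq h hξ.1 hξ.2
  rw [e, intervalIntegral.integral_const_mul]
  have e2 : ∫ ξ in η..y, g ((y - η)⁻¹ * (ξ - η))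
      = ∫ u in (0:ℝ)..(y - η), g ((y - η)⁻¹ * u) := by
    have := intervalIntegral.integral_comp_sub_right (a := η) (b := y)
      (fun u => g ((y - η)⁻¹ * u)) η
    simpa using this
  rw [e2, intervalIntegral.integral_comp_mul_left _ (by positivity : ((y-η)⁻¹ : ℝ) ≠ 0)]
  rw [mul_zero, inv_mul_cancel₀ hc.ne', inv_inv, smul_eq_mul]
  rw [beta_real hα0 hα1]
  field_simp

lemma slice_val {α y : ℝ} (hα0 : 0 < α) (hα1 : α < 1) (η c : ℝ) :
    ∫ ξ in Set.Iio y, (if η < ξ then (y - ξ) ^ (-α) * ((ξ - η) ^ (α - 1) * c) else 0)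
      = if η < y then Real.Gamma α * Real.Gamma (1 - α) * c else 0 := by
  by_cases hη : η < y
  · rw [if_pos hη]
    have e1 : (fun ξ => if η < ξ then (y - ξ) ^ (-α) * ((ξ - η) ^ (α - 1) * c) else 0)
        = Set.indicator (Set.Ioi η) (fun ξ => (y - ξ) ^ (-α) * ((ξ - η) ^ (α - 1) * c)) := by
      funext ξ; simp [Set.indicator_apply, Set.mem_Ioi]
    rw [e1, integral_indicator measurableSet_Ioi, Measure.restrict_restrict measurableSet_Ioi,
      Set.Ioi_inter_Iio, ← integral_Ioc_eq_integral_Ioo,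
      ← intervalIntegral.integral_of_le hη.le]
    have e2 : ∀ ξ : ℝ, (y - ξ) ^ (-α) * ((ξ - η) ^ (α - 1) * c)
        = ((y - ξ) ^ (-α) * (ξ - η) ^ (α - 1)) * c := fun ξ => by ring
    simp_rw [e2]
    rw [intervalIntegral.integral_mul_const, kernel_val hα0 hα1 hη]
  · rw [if_neg hη]
    rw [setIntegral_congr_fun measurableSet_Iio (g := fun _ => (0:ℝ)) fun ξ hξ => ?_]
    · exact integral_zero _ _
    · rw [if_neg (by simp only [Set.mem_Iio] at hξ; push_neg at hη; intro hc; linarith)]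

lemma key {α : ℝ} (hα0 : 0 < α) (hα1 : α < 1) (φ : SchwartzMap ℝ ℝ) (y : ℝ) :
    (1 / Real.Gamma (1 - α)) * ∫ ξ in Set.Iio y, (y - ξ) ^ (-α) *
        ((1 / Real.Gamma α) * ∫ η in Set.Iio ξ, (ξ - η) ^ (α - 1) * φ η)
      = ∫ η in Set.Iio y, φ η := by
  set F : ℝ → ℝ → ℝ :=
    fun ξ η => if η < ξ then (y - ξ) ^ (-α) * ((ξ - η) ^ (α - 1) * φ η) else 0 with hF
  have mk : Measurable (Function.uncurry F) := by
    apply Measurable.ite (measurableSet_lt measurable_snd measurable_fst) ?_ measurable_const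
    fun_prop
  have hInt : Integrable (Function.uncurry F) ((volume.restrict (Set.Iio y)).prod volume) := by
    rw [integrable_prod_iff' mk.aestronglyMeasurable]
    constructor
    · refine Filter.Eventually.of_forall fun η => ?_
      by_cases hη : η < y
      · have e1 : (fun ξ => Function.uncurry F (ξ, η))
            = Set.indicator (Set.Ioi η)
              (fun ξ => (y - ξ) ^ (-α) * ((ξ - η) ^ (α - 1) * φ η)) := by
          funext ξ; simp [hF, Function.uncurry, Set.indicator_apply, Set.mem_Ioi]
        rw [e1, integrable_indicator_iff measurableSet_Ioi, IntegrableOn,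
          Measure.restrict_restrict measurableSet_Ioi, Set.Ioi_inter_Iio]
        have h2 := ((kernel_intInt hα0 hα1 hη).mul_const (φ η)).1
        refine ((h2.mono_set Set.Ioo_subset_Ioc_self).congr_fun ?_ measurableSet_Ioo)
        intro ξ _; simp; ring
      · refine (integrable_zero _ _ _).congr ?_
        filter_upwards [ae_restrict_mem measurableSet_Iio] with ξ hξ
        simp only [Set.mem_Iio] at hξ
        simp only [hF, Function.uncurry]
        rw [if_neg (fun hc => hη (hc.trans hξ))]
        rfl
    · have e2 : (fun η => ∫ ξ in Set.Iio y, ‖Function.uncurry F (ξ, η)‖)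
          = fun η => Set.indicator (Set.Iio y)
              (fun η => Real.Gamma α * Real.Gamma (1 - α) * ‖φ η‖) η := by
        funext η
        have : ∫ ξ in Set.Iio y, ‖Function.uncurry F (ξ, η)‖
            = ∫ ξ in Set.Iio y,
                (if η < ξ then (y - ξ) ^ (-α) * ((ξ - η) ^ (α - 1) * ‖φ η‖) else 0) := by
          refine setIntegral_congr_fun measurableSet_Iio fun ξ hξ => ?_
          simp only [Set.mem_Iio] at hξ
          by_cases hc : η < ξ
          · simp only [hF, Function.uncurry, if_pos hc]
            rw [Real.norm_eq_abs, abs_mul, abs_mul,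
              abs_of_nonneg (Real.rpow_nonneg (by linarith) _),
              abs_of_nonneg (Real.rpow_nonneg (by linarith) _), Real.norm_eq_abs]
          · simp [hF, Function.uncurry, if_neg hc]
        rw [this, slice_val hα0 hα1, Set.indicator_apply]
        simp [Set.mem_Iio]
      rw [e2]
      exact ((φ.integrable.norm.const_mul _).indicator measurableSet_Iio)
  have e3 : ∫ ξ in Set.Iio y, (y - ξ) ^ (-α) *
        ((1 / Real.Gamma α) * ∫ η in Set.Iio ξ, (ξ - η) ^ (α - 1) * φ η)
      = (1 / Real.Gamma α) * ∫ ξ in Set.Iio y, ∫ η, F ξ η := by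
    rw [← integral_const_mul]
    refine setIntegral_congr_fun measurableSet_Iio fun ξ _ => ?_
    have e5 : (fun η => F ξ η) = Set.indicator (Set.Iio ξ)
        (fun η => (y - ξ) ^ (-α) * ((ξ - η) ^ (α - 1) * φ η)) := by
      funext η; simp [hF, Set.indicator_apply, Set.mem_Iio]
    have : ∫ η, F ξ η = ∫ η in Set.Iio ξ, (y - ξ) ^ (-α) * ((ξ - η) ^ (α - 1) * φ η) := by
      rw [show ∫ η, F ξ η = ∫ η, (fun η => F ξ η) η from rfl, e5,
        integral_indicator measurableSet_Iio]
    rw [this, integral_const_mul]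
    ring
  rw [e3, integral_integral_swap hInt]
  have e4 : ∫ η, ∫ ξ in Set.Iio y, F ξ η
      = Real.Gamma α * Real.Gamma (1 - α) * ∫ η in Set.Iio y, φ η := by
    have : (fun η => ∫ ξ in Set.Iio y, F ξ η)
        = fun η => Set.indicator (Set.Iio y)
            (fun η => Real.Gamma α * Real.Gamma (1 - α) * φ η) η := by
      funext η
      rw [show (fun ξ => F ξ η) = fun ξ =>
        if η < ξ then (y - ξ) ^ (-α) * ((ξ - η) ^ (α - 1) * φ η) else 0 from rfl]
      rw [slice_val hα0 hα1, Set.indicator_apply]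
      simp [Set.mem_Iio]
    rw [this, integral_indicator measurableSet_Iio, integral_const_mul]
  rw [e4]
  have hg1 : Real.Gamma α ≠ 0 := (Real.Gamma_pos_of_pos hα0).ne'
  have hg2 : Real.Gamma (1 - α) ≠ 0 := (Real.Gamma_pos_of_pos (by linarith)).ne'
  field_simp

/-- The left Liouville-Weyl fractional derivative is a left inverse of the left Liouville-Weyl
fractional integral: `(d/dx) I_+^{1-α} (I_+^α φ)(x) = φ(x)`. -/
theorem liouville_weyl_left_deriv_left_inverse (φ : SchwartzMap ℝ ℝ) (x : ℝ) (α : ℝ)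
    (hα0 : 0 < α) (hα1 : α < 1) :
    deriv (fun y : ℝ => (1 / Real.Gamma (1 - α)) *
        ∫ ξ in Set.Iio y, (y - ξ) ^ (-α) *
          ((1 / Real.Gamma α) * ∫ η in Set.Iio ξ, (ξ - η) ^ (α - 1) * φ η)) x
      = φ x := by
  have heq : (fun y : ℝ => (1 / Real.Gamma (1 - α)) *
        ∫ ξ in Set.Iio y, (y - ξ) ^ (-α) *
          ((1 / Real.Gamma α) * ∫ η in Set.Iio ξ, (ξ - η) ^ (α - 1) * φ η))
      = fun y : ℝ => ∫ η in Set.Iio y, φ η := funext (key hα0 hα1 φ)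
  rw [heq]
  have hint : ∀ y : ℝ, IntegrableOn (fun η => φ η) (Set.Iic y) volume :=
    fun y => φ.integrable.integrableOn
  have hfun : (fun y : ℝ => ∫ η in Set.Iio y, φ η)
      = fun y : ℝ => (∫ η in Set.Iio x, φ η) + ∫ t in x..y, φ t := by
    funext y
    rw [← integral_Iic_eq_integral_Iio, ← integral_Iic_eq_integral_Iio,
      ← intervalIntegral.integral_Iic_sub_Iic (hint x) (hint y)]
    ring
  rw [hfun]
  have hd : HasDerivAt (fun y : ℝ => (∫ η in Set.Iio x, φ η) + ∫ t in x..y, φ t) (φ x) x := by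
    have := intervalIntegral.integral_hasDerivAt_right (f := fun t => φ t) (a := x) (b := x)
      (φ.integrable.intervalIntegrable)
      (φ.continuous.stronglyMeasurable.stronglyMeasurableAtFilter)
      (φ.continuous.continuousAt)
    exact this.const_add _
  exact hd.deriv
end

section
/- For every Schwartz function φ : ℝ → ℝ, every x ∈ ℝ, and every α with 0 < α < 2 and α not an integer, the antisymmetric combination D_1^α φ(x) = (D_+^α φ(x) - D_-^α φ(x)) / (2 sin(απ/2)) equals the single-integral form Γ(1+α) (cos(απ/2)/π) ∫_{0}^{∞} (φ(x+ξ) - φ(x-ξ)) ξ^{-(α+1)} dξ. -/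
open MeasureTheory Real

private lemma second_diff_bound (φ : SchwartzMap ℝ ℝ) (x : ℝ) :
    ∃ C : ℝ, 0 ≤ C ∧ ∀ ξ : ℝ, 0 ≤ ξ →
      |2 * φ x - φ (x - ξ) - φ (x + ξ)| ≤ C * ξ ^ 2 := by
  set ψ : SchwartzMap ℝ ℝ := SchwartzMap.derivCLM ℝ ℝ φ with hψ
  set C2 : ℝ := SchwartzMap.seminorm ℝ 0 0 (SchwartzMap.derivCLM ℝ ℝ ψ) with hC2def
  have hC2 : 0 ≤ C2 := apply_nonneg _ _
  have hψderiv : ∀ y : ℝ, ‖deriv (ψ : ℝ → ℝ) y‖ ≤ C2 := by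
    intro y
    have h := SchwartzMap.norm_le_seminorm ℝ (SchwartzMap.derivCLM ℝ ℝ ψ) y
    rwa [SchwartzMap.derivCLM_apply] at h
  have hψlip : ∀ a b : ℝ, |ψ a - ψ b| ≤ C2 * |a - b| := by
    intro a b
    have h := convex_univ.norm_image_sub_le_of_norm_deriv_le (f := (ψ : ℝ → ℝ))
      (fun z _ => ψ.differentiable z) (fun z _ => hψderiv z)
      (Set.mem_univ b) (Set.mem_univ a)
    simpa [Real.norm_eq_abs] using h
  have hφ' : ∀ y : ℝ, deriv (φ : ℝ → ℝ) y = ψ y := fun y =>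
    (SchwartzMap.derivCLM_apply (𝕜 := ℝ) φ y).symm
  refine ⟨2 * C2, by positivity, fun ξ hξ => ?_⟩
  set u : ℝ → ℝ := fun t => 2 * φ x - φ (x - t) - φ (x + t) with hu
  have hderiv : ∀ t : ℝ, HasDerivAt u (ψ (x - t) - ψ (x + t)) t := by
    intro t
    have hinner1 : HasDerivAt (fun t : ℝ => x - t) (-1) t := by
      simpa using (hasDerivAt_id t).const_sub x
    have hinner2 : HasDerivAt (fun t : ℝ => x + t) 1 t := by
      simpa using (hasDerivAt_id t).const_add x
    have houter1 : HasDerivAt (φ : ℝ → ℝ) (ψ (x - t)) (x - t) := by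
      have h := (φ.differentiable (x - t)).hasDerivAt
      rwa [hφ'] at h
    have houter2 : HasDerivAt (φ : ℝ → ℝ) (ψ (x + t)) (x + t) := by
      have h := (φ.differentiable (x + t)).hasDerivAt
      rwa [hφ'] at h
    have h1 : HasDerivAt (fun t : ℝ => φ (x - t)) (ψ (x - t) * (-1)) t := by
      simpa [Function.comp_def] using houter1.comp t hinner1
    have h2 : HasDerivAt (fun t : ℝ => φ (x + t)) (ψ (x + t) * 1) t := by
      simpa [Function.comp_def] using houter2.comp t hinner2
    have h := ((hasDerivAt_const t (2 * φ x)).sub h1).sub h2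
    exact h.congr_deriv (by ring)
  have hbound : ∀ t ∈ Set.Ico (0:ℝ) ξ, ‖ψ (x - t) - ψ (x + t)‖ ≤ 2 * C2 * ξ := by
    intro t ht
    have h := hψlip (x - t) (x + t)
    have habs : |x - t - (x + t)| = 2 * t := by
      rw [show x - t - (x + t) = -(2*t) by ring, abs_neg, abs_of_nonneg (by linarith [ht.1])]
    rw [habs] at h
    rw [Real.norm_eq_abs]
    nlinarith [ht.1, ht.2, hC2]
  have hmvt := norm_image_sub_le_of_norm_deriv_le_segment'
    (f := u) (f' := fun t => ψ (x - t) - ψ (x + t)) (a := 0) (b := ξ)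
    (fun t _ => (hderiv t).hasDerivWithinAt) hbound ξ (Set.right_mem_Icc.2 hξ)
  have hu0 : u 0 = 0 := by simp only [hu, sub_zero, add_zero]; ring
  rw [hu0, sub_zero, sub_zero, Real.norm_eq_abs] at hmvt
  calc |u ξ| ≤ 2 * C2 * ξ * ξ := hmvt
    _ = 2 * C2 * ξ ^ 2 := by ring

private lemma S_int (φ : SchwartzMap ℝ ℝ) (x α : ℝ) (hα0 : 0 < α) (hα2 : α < 2) :
    IntegrableOn (fun ξ : ℝ => (2 * φ x - φ (x - ξ) - φ (x + ξ)) * ξ ^ (-(α+1)))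
      (Set.Ioi (0:ℝ)) := by
  have hrpow : ContinuousOn (fun ξ : ℝ => ξ ^ (-(α+1))) (Set.Ioi 0) := fun ξ hξ =>
    (Real.continuousAt_rpow_const ξ _ (Or.inl (ne_of_gt hξ))).continuousWithinAt
  have hcont : ContinuousOn (fun ξ : ℝ => (2 * φ x - φ (x - ξ) - φ (x + ξ)) * ξ ^ (-(α+1)))
      (Set.Ioi (0:ℝ)) := by
    apply ContinuousOn.mul _ hrpow
    exact ((continuous_const.sub (φ.continuous.comp (continuous_const.sub continuous_id))).sub
      (φ.continuous.comp (continuous_const.add continuous_id))).continuousOn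
  obtain ⟨C, hC0, hC⟩ := second_diff_bound φ x
  have M0 : ∀ y : ℝ, |φ y| ≤ SchwartzMap.seminorm ℝ 0 0 φ := fun y => by
    have h := SchwartzMap.norm_le_seminorm ℝ φ y
    rwa [Real.norm_eq_abs] at h
  set M : ℝ := SchwartzMap.seminorm ℝ 0 0 φ with hM
  rw [show Set.Ioi (0:ℝ) = Set.Ioc 0 1 ∪ Set.Ioi 1 from (Set.Ioc_union_Ioi_eq_Ioi zero_le_one).symm]
  apply IntegrableOn.union
  · -- near 0
    have hgi : IntegrableOn (fun ξ : ℝ => C * ξ ^ (1 - α)) (Set.Ioc (0:ℝ) 1) := by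
      rw [integrableOn_Ioc_iff_integrableOn_Ioo]
      exact ((intervalIntegral.integrableOn_Ioo_rpow_iff one_pos).2 (by linarith)).const_mul C
    apply Integrable.mono' hgi
    · exact (hcont.mono (Set.Ioc_subset_Ioi_self)).aestronglyMeasurable measurableSet_Ioc
    · filter_upwards [ae_restrict_mem measurableSet_Ioc] with ξ hξ
      have hξ0 : (0:ℝ) < ξ := hξ.1
      have hr0 : (0:ℝ) ≤ ξ ^ (-(α+1)) := Real.rpow_nonneg hξ0.le _
      rw [Real.norm_eq_abs, abs_mul, abs_of_nonneg hr0]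
      calc |2 * φ x - φ (x - ξ) - φ (x + ξ)| * ξ ^ (-(α+1))
          ≤ (C * ξ ^ 2) * ξ ^ (-(α+1)) :=
            mul_le_mul_of_nonneg_right (hC ξ hξ0.le) hr0
        _ = C * ξ ^ (1 - α) := by
            rw [mul_assoc, ← Real.rpow_natCast ξ 2, ← Real.rpow_add hξ0]
            congr 2
            push_cast
            ring
  · -- tail
    have hgi : IntegrableOn (fun ξ : ℝ => (4 * M) * ξ ^ (-(α+1))) (Set.Ioi (1:ℝ)) :=
      (integrableOn_Ioi_rpow_of_lt (by linarith) one_pos).const_mul _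
    apply Integrable.mono' hgi
    · exact (hcont.mono (t := Set.Ioi (1:ℝ)) (fun y (hy : (1:ℝ) < y) => (lt_trans one_pos hy : (0:ℝ) < y))).aestronglyMeasurable measurableSet_Ioi
    · filter_upwards [ae_restrict_mem measurableSet_Ioi] with ξ hξ
      have hξ0 : (0:ℝ) < ξ := lt_trans one_pos hξ
      have hr0 : (0:ℝ) ≤ ξ ^ (-(α+1)) := Real.rpow_nonneg hξ0.le _
      rw [Real.norm_eq_abs, abs_mul, abs_of_nonneg hr0]
      apply mul_le_mul_of_nonneg_right _ hr0
      have h1 := abs_le.1 (M0 x)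
      have h2 := abs_le.1 (M0 (x - ξ))
      have h3 := abs_le.1 (M0 (x + ξ))
      rw [abs_le]
      constructor <;> linarith

/-- The antisymmetric combination `D_1^α φ(x) = (D_+^α φ(x) - D_-^α φ(x)) / (2 sin(απ/2))`
equals the single-integral form
`Γ(1+α) (cos(απ/2)/π) ∫_0^∞ (φ(x+ξ) - φ(x-ξ)) ξ^{-(α+1)} dξ`, for `0 < α < 2` not an integer,
where `D_±^α` are the regularized Liouville-Weyl fractional derivatives. -/
theorem antisymmetric_deriv_eq_single_integral (φ : SchwartzMap ℝ ℝ) (x : ℝ) (α : ℝ)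
    (hα0 : 0 < α) (hα2 : α < 2) (hαZ : ∀ n : ℤ, α ≠ n) :
    (((α / Real.Gamma (1 - α)) * ∫ ξ in Set.Ioi (0 : ℝ), (φ x - φ (x - ξ)) * ξ ^ (-(α + 1)))
        - ((α / Real.Gamma (1 - α)) * ∫ ξ in Set.Ioi (0 : ℝ), (φ x - φ (x + ξ)) * ξ ^ (-(α + 1))))
        / (2 * Real.sin (α * π / 2))
      = Real.Gamma (1 + α) * (Real.cos (α * π / 2) / π) *
          ∫ ξ in Set.Ioi (0 : ℝ), (φ (x + ξ) - φ (x - ξ)) * ξ ^ (-(α + 1)) := by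
  have hπ := Real.pi_pos
  -- constant identity
  have hs1 : (0:ℝ) < Real.sin (α * π / 2) :=
    Real.sin_pos_of_pos_of_lt_pi (by positivity) (by nlinarith)
  have hcos : Real.cos (α * π / 2) ≠ 0 := by
    intro h
    obtain ⟨k, hk⟩ := Real.cos_eq_zero_iff.1 h
    apply hαZ (2 * k + 1)
    push_cast
    exact mul_right_cancel₀ (ne_of_gt hπ) (show α * π = (2 * (k:ℝ) + 1) * π by linarith)
  have hΓ : Real.Gamma (1 - α) ≠ 0 := by
    apply Real.Gamma_ne_zero
    intro n h
    exact hαZ (n + 1) (by push_cast; linarith)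
  have hsin : Real.sin (π * α) ≠ 0 := by
    intro h
    obtain ⟨n, hn⟩ := Real.sin_eq_zero_iff.1 h
    exact hαZ n (mul_left_cancel₀ (ne_of_gt hπ) (show π * α = π * (n:ℝ) by linarith))
  have h1 : Real.Gamma (1 + α) = α * Real.Gamma α := by
    rw [add_comm]; exact Real.Gamma_add_one (ne_of_gt hα0)
  have h2 : Real.Gamma α * Real.Gamma (1 - α) * Real.sin (π * α) = π := by
    rw [Real.Gamma_mul_Gamma_one_sub α]
    field_simp
  have h3 : Real.sin (π * α) = 2 * Real.sin (α * π / 2) * Real.cos (α * π / 2) := by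
    rw [show π * α = 2 * (α * π / 2) by ring, Real.sin_two_mul]
  have h2' : Real.Gamma α * Real.Gamma (1 - α) *
      (2 * Real.sin (α * π / 2) * Real.cos (α * π / 2)) = π := by rw [← h3]; exact h2
  have hconst : α / Real.Gamma (1 - α) / (2 * Real.sin (α * π / 2))
      = Real.Gamma (1 + α) * (Real.cos (α * π / 2) / π) := by
    rw [h1]
    field_simp
    linear_combination (-1 : ℝ) * h2'
  -- integrals
  have hS := S_int φ x α hα0 hα2
  by_cases hF : IntegrableOn (fun ξ : ℝ => (φ x - φ (x - ξ)) * ξ ^ (-(α + 1))) (Set.Ioi 0)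
  · have hG : IntegrableOn (fun ξ : ℝ => (φ x - φ (x + ξ)) * ξ ^ (-(α + 1))) (Set.Ioi 0) := by
      exact (hS.sub hF).congr (Filter.Eventually.of_forall fun ξ => by
        simp only [Pi.sub_apply]; ring)
    have key : (∫ ξ in Set.Ioi (0:ℝ), (φ x - φ (x - ξ)) * ξ ^ (-(α + 1)))
        - (∫ ξ in Set.Ioi (0:ℝ), (φ x - φ (x + ξ)) * ξ ^ (-(α + 1)))
        = ∫ ξ in Set.Ioi (0:ℝ), (φ (x + ξ) - φ (x - ξ)) * ξ ^ (-(α + 1)) := by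
      rw [← integral_sub hF hG]
      congr 1
      funext ξ
      ring
    rw [← key, ← hconst]
    ring
  · have hG : ¬ IntegrableOn (fun ξ : ℝ => (φ x - φ (x + ξ)) * ξ ^ (-(α + 1))) (Set.Ioi 0) := by
      intro hG
      apply hF
      exact (hS.sub hG).congr (Filter.Eventually.of_forall fun ξ => by
        simp only [Pi.sub_apply]; ring)
    have hH : ¬ IntegrableOn (fun ξ : ℝ => (φ (x + ξ) - φ (x - ξ)) * ξ ^ (-(α + 1)))
        (Set.Ioi 0) := by
      intro hH
      apply hF
      exact ((hS.add hH).const_mul (1/2 : ℝ)).congr (Filter.Eventually.of_forall fun ξ => by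
        simp only [Pi.add_apply]; ring)
    rw [integral_undef hF, integral_undef hG, integral_undef hH]
    simp
end

section
/- For every Schwartz function f : ℝ → ℝ and every x ∈ ℝ, the renormalized first-order fractional derivative converges to the ordinary derivative: the limit as α → 1 from below of Γ(1+α) (cos(απ/2)/π) ∫_{0}^{∞} (f(x+ξ) - f(x-ξ)) ξ^{-(α+1)} dξ equals f'(x). -/
open MeasureTheory Real Filter

namespace FracDerivAux

open Set

lemma int_psi (g : ℝ → ℝ) (hg : Continuous g) (D L : ℝ) (hL0 : 0 ≤ L)
    (hgT : ∀ ξ : ℝ, 0 ≤ ξ → ‖g ξ - 2 * D * ξ‖ ≤ 2 * L * ξ ^ 2)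
    (α : ℝ) (hα : α ∈ Ioo (1/2 : ℝ) 1) :
    IntegrableOn (fun ξ : ℝ => (g ξ - 2*D*ξ) * ξ ^ (-(α+1))) (Ioc (0:ℝ) 1) := by
  obtain ⟨hα2, hα1⟩ := hα
  have hmeas2 : AEStronglyMeasurable (fun ξ : ℝ => (g ξ - 2*D*ξ) * ξ ^ (-(α+1))) volume :=
    ((hg.measurable.sub (measurable_const.mul measurable_id)).mul
      (measurable_id.pow_const _)).aestronglyMeasurable
  have hconst : IntegrableOn (fun _ : ℝ => 2*L) (Ioc (0:ℝ) 1) volume :=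
    integrableOn_const measure_Ioc_lt_top.ne
  apply Integrable.mono hconst hmeas2.restrict
  filter_upwards [ae_restrict_mem measurableSet_Ioc] with ξ hξ
  obtain ⟨h0, h1⟩ := hξ
  have hrnn : (0:ℝ) ≤ ξ ^ (-(α+1)) := Real.rpow_nonneg h0.le _
  have hb : ‖(g ξ - 2*D*ξ) * ξ ^ (-(α+1))‖ ≤ 2 * L * ξ ^ 2 * ξ ^ (-(α+1)) := by
    rw [norm_mul, Real.norm_eq_abs (ξ ^ (-(α+1))), abs_of_nonneg hrnn]
    exact mul_le_mul_of_nonneg_right (hgT ξ h0.le) hrnn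
  refine hb.trans ?_
  rw [Real.norm_eq_abs, abs_of_nonneg (by linarith : (0:ℝ) ≤ 2*L)]
  have hpow : ξ ^ 2 * ξ ^ (-(α+1)) = ξ ^ (1 - α) := by
    rw [← Real.rpow_natCast ξ 2, ← Real.rpow_add h0]
    congr 1
    push_cast; ring
  rw [mul_assoc, hpow]
  have hle1 : ξ ^ (1 - α) ≤ 1 := Real.rpow_le_one h0.le h1 (by linarith)
  nlinarith [Real.rpow_nonneg h0.le (1 - α)]

lemma int_phi2 (g : ℝ → ℝ) (hg : Continuous g) (B : ℝ)
    (hgB : ∀ ξ, ‖g ξ‖ ≤ 2 * B)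
    (α : ℝ) (hα : α ∈ Ioo (1/2 : ℝ) 1) :
    IntegrableOn (fun ξ : ℝ => g ξ * ξ ^ (-(α+1))) (Ioi (1:ℝ)) := by
  obtain ⟨hα2, hα1⟩ := hα
  have hmeas : AEStronglyMeasurable (fun ξ : ℝ => g ξ * ξ ^ (-(α+1))) volume :=
    (hg.measurable.mul (measurable_id.pow_const _)).aestronglyMeasurable
  apply Integrable.mono (((integrableOn_Ioi_rpow_of_lt
    (by linarith : -(α+1) < -1) one_pos).const_mul (2*B))) hmeas.restrict
  filter_upwards [ae_restrict_mem measurableSet_Ioi] with ξ hξ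
  have h1 : (1:ℝ) < ξ := hξ
  have hrnn : (0:ℝ) ≤ ξ ^ (-(α+1)) := Real.rpow_nonneg (by linarith) _
  calc ‖g ξ * ξ ^ (-(α+1))‖ = ‖g ξ‖ * ξ ^ (-(α+1)) := by
        rw [norm_mul, Real.norm_eq_abs (ξ ^ (-(α+1))), abs_of_nonneg hrnn]
    _ ≤ 2*B * ξ ^ (-(α+1)) := mul_le_mul_of_nonneg_right (hgB ξ) hrnn
    _ ≤ ‖2*B * ξ ^ (-(α+1))‖ := le_abs_self _

lemma frac_eq (g : ℝ → ℝ) (hg : Continuous g) (D B L : ℝ) (hL0 : 0 ≤ L)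
    (hgB : ∀ ξ, ‖g ξ‖ ≤ 2 * B)
    (hgT : ∀ ξ : ℝ, 0 ≤ ξ → ‖g ξ - 2 * D * ξ‖ ≤ 2 * L * ξ ^ 2)
    (α : ℝ) (hα : α ∈ Ioo (1/2 : ℝ) 1) :
    (∫ ξ in Ioi (0:ℝ), g ξ * ξ ^ (-(α+1)))
      = ((∫ ξ in Ioc (0:ℝ) 1, (g ξ - 2*D*ξ) * ξ ^ (-(α+1)))
          + ∫ ξ in Ioi (1:ℝ), g ξ * ξ ^ (-(α+1)))
        + 2 * D * (1 - α)⁻¹ := by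
  have hψint := int_psi g hg D L hL0 hgT α hα
  have hφint2 := int_phi2 g hg B hgB α hα
  obtain ⟨hα2, hα1⟩ := hα
  have hαpos : 0 < α := by linarith
  have hmeas : ∀ c : ℝ, AEStronglyMeasurable (fun ξ : ℝ => g ξ * ξ ^ c) volume :=
    fun c => (hg.measurable.mul (measurable_id.pow_const c)).aestronglyMeasurable
  have hrint : IntegrableOn (fun ξ : ℝ => ξ ^ (-α)) (Ioc (0:ℝ) 1) := by
    have := intervalIntegral.intervalIntegrable_rpow' (a := 0) (b := 1) (r := -α) (by linarith)
    rwa [intervalIntegrable_iff_integrableOn_Ioc_of_le zero_le_one] at this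
  have hφint1 : IntegrableOn (fun ξ : ℝ => g ξ * ξ ^ (-(α+1))) (Ioc (0:ℝ) 1) := by
    apply Integrable.mono ((hrint.const_mul (2*L + 2 * |D|))) (hmeas _).restrict
    filter_upwards [ae_restrict_mem measurableSet_Ioc] with ξ hξ
    obtain ⟨h0, h1⟩ := hξ
    have hrnn : (0:ℝ) ≤ ξ ^ (-(α+1)) := Real.rpow_nonneg h0.le _
    have h2 : ‖g ξ‖ ≤ 2*L*ξ^2 + 2 * |D| * ξ := by
      have h3 := norm_add_le (g ξ - 2*D*ξ) (2*D*ξ)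
      rw [sub_add_cancel] at h3
      refine h3.trans (add_le_add (hgT ξ h0.le) ?_)
      rw [Real.norm_eq_abs, abs_mul, abs_mul, abs_two, abs_of_nonneg h0.le]
    have hgb : ‖g ξ‖ ≤ (2*L + 2 * |D|) * ξ := by
      nlinarith [mul_nonneg (mul_nonneg hL0 h0.le) (sub_nonneg.2 h1)]
    have hxne : ξ * ξ ^ (-(α+1)) = ξ ^ (-α) := by
      nth_rewrite 1 [← Real.rpow_one ξ]
      rw [← Real.rpow_add h0]
      congr 1; ring
    calc ‖g ξ * ξ ^ (-(α+1))‖ = ‖g ξ‖ * ξ ^ (-(α+1)) := by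
          rw [norm_mul, Real.norm_eq_abs (ξ ^ (-(α+1))), abs_of_nonneg hrnn]
      _ ≤ (2*L + 2 * |D|) * ξ * ξ ^ (-(α+1)) := mul_le_mul_of_nonneg_right hgb hrnn
      _ = (2*L + 2 * |D|) * ξ ^ (-α) := by rw [mul_assoc, hxne]
      _ ≤ ‖(2*L + 2 * |D|) * ξ ^ (-α)‖ := le_abs_self _
  have hsplit : (∫ ξ in Ioi (0:ℝ), g ξ * ξ ^ (-(α+1)))
      = (∫ ξ in Ioc (0:ℝ) 1, g ξ * ξ ^ (-(α+1))) + ∫ ξ in Ioi (1:ℝ), g ξ * ξ ^ (-(α+1)) := by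
    rw [← setIntegral_union (Ioc_disjoint_Ioi le_rfl) measurableSet_Ioi hφint1 hφint2,
      Ioc_union_Ioi_eq_Ioi zero_le_one]
  rw [hsplit]
  have hval : (∫ ξ in Ioc (0:ℝ) 1, ξ ^ (-α)) = (1 - α)⁻¹ := by
    rw [← intervalIntegral.integral_of_le zero_le_one,
      integral_rpow (Or.inl (by linarith : (-1:ℝ) < -α))]
    rw [Real.zero_rpow (by linarith : -α + 1 ≠ 0), Real.one_rpow]
    rw [show -α + 1 = 1 - α by ring]
    field_simp
    norm_num
  have hdecomp : (∫ ξ in Ioc (0:ℝ) 1, g ξ * ξ ^ (-(α+1)))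
      = (∫ ξ in Ioc (0:ℝ) 1, (g ξ - 2*D*ξ) * ξ ^ (-(α+1))) + 2 * D * (1 - α)⁻¹ := by
    have heq : ∀ ξ ∈ Ioc (0:ℝ) 1, g ξ * ξ ^ (-(α+1))
        = (g ξ - 2*D*ξ) * ξ ^ (-(α+1)) + 2*D * ξ ^ (-α) := by
      intro ξ hξ
      have h0 : (0:ℝ) < ξ := hξ.1
      have hxne : ξ * ξ ^ (-(α+1)) = ξ ^ (-α) := by
        nth_rewrite 1 [← Real.rpow_one ξ]
        rw [← Real.rpow_add h0]
        congr 1; ring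
      rw [← hxne]; ring
    rw [setIntegral_congr_fun measurableSet_Ioc heq,
      integral_add hψint (hrint.const_mul (2*D)),
      integral_const_mul, hval]
  rw [hdecomp]; ring

lemma frac_bound (g : ℝ → ℝ) (hg : Continuous g) (D B L : ℝ) (hB0 : 0 ≤ B) (hL0 : 0 ≤ L)
    (hgB : ∀ ξ, ‖g ξ‖ ≤ 2 * B)
    (hgT : ∀ ξ : ℝ, 0 ≤ ξ → ‖g ξ - 2 * D * ξ‖ ≤ 2 * L * ξ ^ 2)
    (α : ℝ) (hα : α ∈ Ioo (1/2 : ℝ) 1) :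
    ‖(∫ ξ in Ioc (0:ℝ) 1, (g ξ - 2*D*ξ) * ξ ^ (-(α+1)))
      + ∫ ξ in Ioi (1:ℝ), g ξ * ξ ^ (-(α+1))‖
    ≤ 2*L + ∫ ξ in Ioi (1:ℝ), 2*B * ξ ^ (-(3/2):ℝ) := by
  have hψint := int_psi g hg D L hL0 hgT α hα
  have hφint2 := int_phi2 g hg B hgB α hα
  obtain ⟨hα2, hα1⟩ := hα
  have hb1 : ‖∫ ξ in Ioc (0:ℝ) 1, (g ξ - 2*D*ξ) * ξ ^ (-(α+1))‖ ≤ 2*L := by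
    have := norm_setIntegral_le_of_norm_le_const (μ := volume) (s := Ioc (0:ℝ) 1)
      (C := 2*L) (f := fun ξ : ℝ => (g ξ - 2*D*ξ) * ξ ^ (-(α+1)))
      measure_Ioc_lt_top ?_
    · simpa using this
    · intro ξ hξ
      obtain ⟨h0, h1⟩ := hξ
      have hrnn : (0:ℝ) ≤ ξ ^ (-(α+1)) := Real.rpow_nonneg h0.le _
      have hb : ‖(g ξ - 2*D*ξ) * ξ ^ (-(α+1))‖ ≤ 2 * L * ξ ^ 2 * ξ ^ (-(α+1)) := by
        rw [norm_mul, Real.norm_eq_abs (ξ ^ (-(α+1))), abs_of_nonneg hrnn]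
        exact mul_le_mul_of_nonneg_right (hgT ξ h0.le) hrnn
      refine hb.trans ?_
      have hpow : ξ ^ 2 * ξ ^ (-(α+1)) = ξ ^ (1 - α) := by
        rw [← Real.rpow_natCast ξ 2, ← Real.rpow_add h0]
        congr 1
        push_cast; ring
      rw [mul_assoc, hpow]
      have hle1 : ξ ^ (1 - α) ≤ 1 := Real.rpow_le_one h0.le h1 (by linarith)
      nlinarith [Real.rpow_nonneg h0.le (1 - α)]
  have hdomint : IntegrableOn (fun ξ : ℝ => 2*B * ξ ^ (-(3/2):ℝ)) (Ioi (1:ℝ)) :=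
    (integrableOn_Ioi_rpow_of_lt (by norm_num) one_pos).const_mul (2*B)
  have hb2 : ‖∫ ξ in Ioi (1:ℝ), g ξ * ξ ^ (-(α+1))‖
      ≤ ∫ ξ in Ioi (1:ℝ), 2*B * ξ ^ (-(3/2):ℝ) := by
    refine (norm_integral_le_integral_norm _).trans ?_
    apply setIntegral_mono_on hφint2.norm hdomint measurableSet_Ioi
    intro ξ hξ
    have h1 : (1:ℝ) < ξ := hξ
    have h0 : (0:ℝ) < ξ := by linarith
    have hrnn : (0:ℝ) ≤ ξ ^ (-(α+1)) := Real.rpow_nonneg h0.le _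
    calc ‖g ξ * ξ ^ (-(α+1))‖ = ‖g ξ‖ * ξ ^ (-(α+1)) := by
          rw [norm_mul, Real.norm_eq_abs (ξ ^ (-(α+1))), abs_of_nonneg hrnn]
      _ ≤ 2*B * ξ ^ (-(α+1)) := mul_le_mul_of_nonneg_right (hgB ξ) hrnn
      _ ≤ 2*B * ξ ^ (-(3/2):ℝ) := by
          apply mul_le_mul_of_nonneg_left _ (by linarith : (0:ℝ) ≤ 2*B)
          exact Real.rpow_le_rpow_of_exponent_le h1.le (by linarith)
  calc ‖(∫ ξ in Ioc (0:ℝ) 1, (g ξ - 2*D*ξ) * ξ ^ (-(α+1)))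
        + ∫ ξ in Ioi (1:ℝ), g ξ * ξ ^ (-(α+1))‖
      ≤ ‖∫ ξ in Ioc (0:ℝ) 1, (g ξ - 2*D*ξ) * ξ ^ (-(α+1))‖
        + ‖∫ ξ in Ioi (1:ℝ), g ξ * ξ ^ (-(α+1))‖ := norm_add_le _ _
    _ ≤ 2*L + ∫ ξ in Ioi (1:ℝ), 2*B * ξ ^ (-(3/2):ℝ) := add_le_add hb1 hb2

lemma frac_limit (R : ℝ → ℝ) (D K : ℝ)
    (hR : ∀ α ∈ Ioo (1/2 : ℝ) 1, ‖R α‖ ≤ K) :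
    Tendsto (fun α : ℝ => Real.Gamma (1 + α) * (Real.cos (α * π / 2) / π) *
        (R α + 2 * D * (1 - α)⁻¹)) (nhdsWithin 1 (Iio 1)) (nhds D) := by
  set c : ℝ → ℝ := fun α => Real.Gamma (1 + α) * (Real.cos (α * π / 2) / π) with hc
  set u : ℝ → ℝ := fun α => (1 - α) * (π / 2) with hu
  have hGamma : ContinuousAt (fun α : ℝ => Real.Gamma (1 + α)) 1 := by
    have h2 : DifferentiableAt ℝ Real.Gamma 2 := by
      apply Real.differentiableAt_Gamma
      intro m h
      have hm : (0:ℝ) ≤ m := Nat.cast_nonneg m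
      linarith
    have h2' : ContinuousAt Real.Gamma ((1:ℝ) + 1) := by
      rw [show (1:ℝ) + 1 = 2 by norm_num]
      exact h2.continuousAt
    have hadd : ContinuousAt (fun α : ℝ => 1 + α) 1 := by fun_prop
    exact ContinuousAt.comp (f := fun α : ℝ => 1 + α) (g := Real.Gamma) h2' hadd
  have hccont : ContinuousAt c 1 :=
    hGamma.mul ((Real.continuous_cos.continuousAt.comp (by fun_prop)).div_const π)
  have hc0 : Tendsto c (nhdsWithin 1 (Iio 1)) (nhds 0) := by
    have h := hccont.continuousWithinAt (s := Iio 1)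
    have hval : c 1 = 0 := by simp [hc, Real.cos_pi_div_two]
    rw [ContinuousWithinAt, hval] at h
    exact h
  have h1 : Tendsto (fun α => c α * R α) (nhdsWithin 1 (Iio 1)) (nhds 0) := by
    apply squeeze_zero_norm' (a := fun α => ‖c α‖ * K)
    · filter_upwards [Ioo_mem_nhdsLT_of_mem (by norm_num : (1:ℝ) ∈ Ioc (1/2:ℝ) 1)] with α hα
      calc ‖c α * R α‖ = ‖c α‖ * ‖R α‖ := norm_mul _ _
        _ ≤ ‖c α‖ * K := mul_le_mul_of_nonneg_left (hR α hα) (norm_nonneg _)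
    · simpa using hc0.norm.mul_const K
  have hsl : Tendsto (fun t : ℝ => Real.sin t / t) (nhdsWithin 0 {(0:ℝ)}ᶜ) (nhds 1) := by
    have := hasDerivAt_iff_tendsto_slope.mp (Real.hasDerivAt_sin 0)
    rw [Real.cos_zero] at this
    refine this.congr fun t => ?_
    simp [slope_def_field]
  have hut : Tendsto u (nhdsWithin 1 (Iio 1)) (nhdsWithin 0 {(0:ℝ)}ᶜ) := by
    apply tendsto_nhdsWithin_of_tendsto_nhds_of_eventually_within
    · have hcu : Continuous u := by
        rw [hu]; continuity
      have := (hcu.tendsto 1).mono_left (nhdsWithin_le_nhds (s := Iio 1))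
      simpa [hu] using this
    · filter_upwards [eventually_mem_nhdsWithin] with α (hα : α < 1)
      have : 0 < u α := mul_pos (by linarith) (by positivity)
      exact ne_of_gt this
  have h2 : Tendsto (fun α => Real.Gamma (1 + α) * (Real.sin (u α) / u α) * D)
      (nhdsWithin 1 (Iio 1)) (nhds D) := by
    have hg : Tendsto (fun α : ℝ => Real.Gamma (1 + α)) (nhdsWithin 1 (Iio 1))
        (nhds (Real.Gamma ((1:ℝ) + 1))) := by
      have h := hGamma.continuousWithinAt (s := Iio 1)
      rw [ContinuousWithinAt] at h
      exact h
    have hfin := (hg.mul (hsl.comp hut)).mul_const D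
    have : Real.Gamma ((1:ℝ) + 1) * 1 * D = D := by
      rw [show (1:ℝ) + 1 = 2 by norm_num, Real.Gamma_two]; ring
    rwa [this] at hfin
  have heq : ∀ᶠ α in nhdsWithin 1 (Iio 1),
      c α * R α + Real.Gamma (1 + α) * (Real.sin (u α) / u α) * D
        = c α * (R α + 2 * D * (1 - α)⁻¹) := by
    filter_upwards [eventually_mem_nhdsWithin] with α (hα : α < 1)
    have h1α : (1:ℝ) - α ≠ 0 := sub_ne_zero.2 (by exact fun h => absurd h.symm (ne_of_lt hα))
    have hπ : π ≠ 0 := Real.pi_ne_zero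
    have hcos : Real.cos (α * π / 2) = Real.sin (u α) := by
      rw [hu, ← Real.sin_pi_div_two_sub]
      congr 1
      ring
    simp only [hc, hu]
    rw [hcos, hu]
    have huα : (1 - α) * (π / 2) ≠ 0 := mul_ne_zero h1α (by positivity)
    field_simp
  have := (h1.add h2).congr' heq
  simpa using this

end FracDerivAux

/-- The renormalized first-order fractional derivative converges to the ordinary derivative:
as `α → 1⁻`,
`Γ(1+α) (cos(απ/2)/π) ∫_0^∞ (f(x+ξ) - f(x-ξ)) ξ^{-(α+1)} dξ → f'(x)`. -/
theorem fractional_deriv_tendsto_first_deriv (f : SchwartzMap ℝ ℝ) (x : ℝ) :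
    Tendsto (fun α : ℝ => Real.Gamma (1 + α) * (Real.cos (α * π / 2) / π) *
        ∫ ξ in Set.Ioi (0 : ℝ), (f (x + ξ) - f (x - ξ)) * ξ ^ (-(α + 1)))
      (nhdsWithin 1 (Set.Iio 1)) (nhds (deriv f x)) := by
  open Set FracDerivAux in
  -- bounds from the Schwartz structure
  obtain ⟨B, -, hB⟩ := f.decay 0 0
  have hBf : ∀ y, ‖f y‖ ≤ B := by
    intro y; have := hB y; simpa [norm_iteratedFDeriv_zero] using this
  have hB0 : 0 ≤ B := le_trans (norm_nonneg _) (hBf 0)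
  set f1 := SchwartzMap.derivCLM ℝ ℝ f with hf1
  set f2 := SchwartzMap.derivCLM ℝ ℝ f1 with hf2
  obtain ⟨L, -, hL⟩ := f2.decay 0 0
  have hLf : ∀ y, ‖f2 y‖ ≤ L := by
    intro y; have := hL y; simpa [norm_iteratedFDeriv_zero] using this
  have hL0 : 0 ≤ L := le_trans (norm_nonneg _) (hLf 0)
  have hdf : ∀ y, deriv f y = f1 y := fun y => (SchwartzMap.derivCLM_apply (𝕜 := ℝ) f y).symm
  have hdf1 : ∀ y, deriv f1 y = f2 y := fun y => (SchwartzMap.derivCLM_apply (𝕜 := ℝ) f1 y).symm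
  have hlip : LipschitzWith (Real.toNNReal L) f1 := by
    apply lipschitzWith_of_nnnorm_deriv_le f1.differentiable
    intro y
    rw [← NNReal.coe_le_coe]
    simp only [coe_nnnorm, Real.coe_toNNReal _ hL0, hdf1 y]
    exact hLf y
  -- the odd part
  set g : ℝ → ℝ := fun ξ => f (x + ξ) - f (x - ξ) with hgdef
  have hgc : Continuous g :=
    (f.continuous.comp (continuous_const.add continuous_id)).sub
      (f.continuous.comp (continuous_const.sub continuous_id))
  have hgB : ∀ ξ, ‖g ξ‖ ≤ 2 * B := by
    intro ξ
    calc ‖g ξ‖ ≤ ‖f (x + ξ)‖ + ‖f (x - ξ)‖ := norm_sub_le _ _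
      _ ≤ B + B := add_le_add (hBf _) (hBf _)
      _ = 2 * B := by ring
  -- Taylor-type bound
  have hgT : ∀ ξ : ℝ, 0 ≤ ξ → ‖g ξ - 2 * deriv f x * ξ‖ ≤ 2 * L * ξ ^ 2 := by
    intro ξ hξ
    set h : ℝ → ℝ := fun t => f (x + t) - f (x - t) - 2 * deriv f x * t with hh
    have hd : ∀ t : ℝ, HasDerivAt h (f1 (x + t) + f1 (x - t) - 2 * deriv f x) t := by
      intro t
      have h1 : HasDerivAt (fun t : ℝ => f (x + t)) (f1 (x + t)) t := by
        have := (f.differentiable (x + t)).hasDerivAt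
        rw [hdf] at this
        simpa [Function.comp_def] using this.comp t ((hasDerivAt_id t).const_add x)
      have h2 : HasDerivAt (fun t : ℝ => f (x - t)) (-f1 (x - t)) t := by
        have := (f.differentiable (x - t)).hasDerivAt
        rw [hdf] at this
        simpa [Function.comp_def] using this.comp t ((hasDerivAt_const t x).sub (hasDerivAt_id t))
      have h3 : HasDerivAt (fun t : ℝ => 2 * deriv f x * t) (2 * deriv f x) t := by
        simpa using (hasDerivAt_id t).const_mul (2 * deriv f x)
      have := (h1.sub h2).sub h3
      exact this.congr_deriv (by ring)
    have hbound : ∀ t ∈ Icc (0:ℝ) ξ,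
        ‖f1 (x + t) + f1 (x - t) - 2 * deriv f x‖ ≤ 2 * L * ξ := by
      intro t ht
      have e1 : ‖f1 (x + t) - f1 x‖ ≤ L * t := by
        have := hlip.dist_le_mul (x + t) x
        simp only [Real.coe_toNNReal _ hL0, Real.dist_eq] at this
        calc ‖f1 (x + t) - f1 x‖ = dist (f1 (x + t)) (f1 x) := by rw [Real.dist_eq]; rfl
          _ ≤ L * |x + t - x| := this
          _ = L * t := by rw [show x + t - x = t by ring, abs_of_nonneg ht.1]
      have e2 : ‖f1 (x - t) - f1 x‖ ≤ L * t := by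
        have := hlip.dist_le_mul (x - t) x
        simp only [Real.coe_toNNReal _ hL0, Real.dist_eq] at this
        calc ‖f1 (x - t) - f1 x‖ = dist (f1 (x - t)) (f1 x) := by rw [Real.dist_eq]; rfl
          _ ≤ L * |x - t - x| := this
          _ = L * t := by rw [show x - t - x = -t by ring, abs_neg, abs_of_nonneg ht.1]
      have : f1 (x + t) + f1 (x - t) - 2 * deriv f x
          = (f1 (x + t) - f1 x) + (f1 (x - t) - f1 x) := by rw [hdf]; ring
      rw [this]
      calc ‖(f1 (x + t) - f1 x) + (f1 (x - t) - f1 x)‖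
          ≤ ‖f1 (x + t) - f1 x‖ + ‖f1 (x - t) - f1 x‖ := norm_add_le _ _
        _ ≤ L * t + L * t := add_le_add e1 e2
        _ = 2 * L * t := by ring
        _ ≤ 2 * L * ξ := by nlinarith [ht.2]
    have key := (convex_Icc (0:ℝ) ξ).norm_image_sub_le_of_norm_hasDerivWithin_le
      (fun t ht => (hd t).hasDerivWithinAt) hbound (left_mem_Icc.2 hξ) (right_mem_Icc.2 hξ)
    have h0 : h 0 = 0 := by simp [hh]
    rw [h0, sub_zero] at key
    calc ‖g ξ - 2 * deriv f x * ξ‖ = ‖h ξ‖ := rfl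
      _ ≤ 2 * L * ξ * ‖ξ - 0‖ := key
      _ = 2 * L * ξ ^ 2 := by rw [sub_zero, Real.norm_eq_abs, abs_of_nonneg hξ]; ring
  -- remainder function and its bound
  set D : ℝ := deriv f x with hD
  set R : ℝ → ℝ := fun α => (∫ ξ in Ioc (0:ℝ) 1, (g ξ - 2*D*ξ) * ξ ^ (-(α+1)))
      + ∫ ξ in Ioi (1:ℝ), g ξ * ξ ^ (-(α+1)) with hR
  set K : ℝ := 2*L + ∫ ξ in Ioi (1:ℝ), 2*B * ξ ^ (-(3/2):ℝ) with hK
  have hRbound : ∀ α ∈ Ioo (1/2 : ℝ) 1, ‖R α‖ ≤ K :=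
    fun α hα => frac_bound g hgc D B L hB0 hL0 hgB hgT α hα
  have hlim := frac_limit R D K hRbound
  apply hlim.congr'
  filter_upwards [Ioo_mem_nhdsLT_of_mem (by norm_num : (1:ℝ) ∈ Ioc (1/2:ℝ) 1)] with α hα
  have := frac_eq g hgc D B L hL0 hgB hgT α hα
  congr 1
  exact this.symm
end

section
/- For all Schwartz functions f, g : ℝ → ℝ and every α with 0 < α < 1, the fractional derivative ₁D^α f(x) = Γ(1+α) (cos(απ/2)/π) ∫_{0}^{∞} (f(x+ξ) - f(x-ξ)) ξ^{-(α+1)} dξ is antisymmetric with respect to the L² pairing: ∫_{-∞}^{∞} (₁D^α f)(x) g(x) dx = - ∫_{-∞}^{∞} f(x) (₁D^α g)(x) dx. -/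
open MeasureTheory Real
section FracAux
open Set

-- bound on a Schwartz function
lemma schwartz_bdd (f : SchwartzMap ℝ ℝ) : ∃ C, 0 ≤ C ∧ ∀ x, ‖f x‖ ≤ C := by
  obtain ⟨C, hCpos, hC⟩ := f.decay 0 0
  have h : ∀ x, ‖f x‖ ≤ C := by intro x; simpa using hC x
  exact ⟨C, le_trans (norm_nonneg _) (h 0), h⟩

-- Lipschitz bound on a Schwartz function
lemma schwartz_lip (f : SchwartzMap ℝ ℝ) : ∃ C, 0 ≤ C ∧ ∀ x y, ‖f x - f y‖ ≤ C * ‖x - y‖ := by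
  obtain ⟨C, hCpos, hC⟩ := (SchwartzMap.derivCLM ℝ ℝ f).decay 0 0
  have h : ∀ x, ‖deriv (⇑f) x‖ ≤ C := by
    intro x
    have := hC x
    simpa [SchwartzMap.derivCLM_apply] using this
  have hC0 : 0 ≤ C := le_trans (norm_nonneg _) (h 0)
  have hl : LipschitzWith C.toNNReal (⇑f) := by
    refine lipschitzWith_of_nnnorm_deriv_le f.differentiable (fun x => ?_)
    rw [← NNReal.coe_le_coe, coe_nnnorm, Real.coe_toNNReal _ hC0]
    exact h x
  refine ⟨C, hC0, fun x y => ?_⟩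
  have := hl.dist_le_mul x y
  rwa [Real.coe_toNNReal _ hC0, dist_eq_norm, dist_eq_norm] at this

-- integrability of the dominating kernel
lemma phi_integrable {α C0 C1 : ℝ} (hα0 : 0 < α) (hα1 : α < 1) (hC0 : 0 ≤ C0) (hC1 : 0 ≤ C1) :
    IntegrableOn (fun ξ : ℝ => min (2 * C0) (2 * C1 * ξ) * ξ ^ (-(α + 1))) (Ioi 0) := by
  have hmeas : ∀ s : Set ℝ, MeasurableSet s → (∀ x ∈ s, (0:ℝ) < x) →
      AEStronglyMeasurable (fun ξ : ℝ => min (2 * C0) (2 * C1 * ξ) * ξ ^ (-(α + 1)))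
        (volume.restrict s) := by
    intro s hs hpos
    refine ContinuousOn.aestronglyMeasurable (fun x hx => ?_) hs
    exact (((continuous_const.min (continuous_const.mul continuous_id)).continuousAt).mul
      ((Real.continuousAt_rpow_const x _ (Or.inl (hpos x hx).ne')))).continuousWithinAt
  rw [← Ioc_union_Ioi_eq_Ioi (zero_le_one' ℝ)]
  refine IntegrableOn.union ?_ ?_
  · have hbase : IntegrableOn (fun ξ : ℝ => 2 * C1 * ξ ^ (-α)) (Ioc 0 1) :=
      ((intervalIntegral.intervalIntegrable_rpow' (by linarith : (-1:ℝ) < -α) (a := 0) (b := 1)).1).const_mul _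
    refine hbase.mono' (hmeas _ measurableSet_Ioc (fun x hx => hx.1)) ?_
    filter_upwards [ae_restrict_mem measurableSet_Ioc] with ξ hξ
    have hξ0 : (0:ℝ) < ξ := hξ.1
    have hr : (0:ℝ) ≤ ξ ^ (-(α + 1)) := Real.rpow_nonneg hξ0.le _
    have hmin : min (2 * C0) (2 * C1 * ξ) * ξ ^ (-(α + 1)) ≤ 2 * C1 * ξ ^ (-α) := by
      have h1 : min (2 * C0) (2 * C1 * ξ) ≤ 2 * C1 * ξ := min_le_right _ _
      have h2 : min (2 * C0) (2 * C1 * ξ) * ξ ^ (-(α + 1)) ≤ (2 * C1 * ξ) * ξ ^ (-(α + 1)) :=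
        mul_le_mul_of_nonneg_right h1 hr
      have h3 : ξ * ξ ^ (-(α + 1)) = ξ ^ (-α) := by
        rw [show (-α) = 1 + -(α + 1) by ring, Real.rpow_add hξ0, Real.rpow_one]
      calc min (2 * C0) (2 * C1 * ξ) * ξ ^ (-(α + 1)) ≤ (2 * C1 * ξ) * ξ ^ (-(α + 1)) := h2
      _ = 2 * C1 * (ξ * ξ ^ (-(α + 1))) := by ring
      _ = 2 * C1 * ξ ^ (-α) := by rw [h3]
    have hnn : 0 ≤ min (2 * C0) (2 * C1 * ξ) * ξ ^ (-(α + 1)) :=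
      mul_nonneg (le_min (by linarith) (by positivity)) hr
    rw [Real.norm_of_nonneg hnn]
    exact hmin
  · have hbase : IntegrableOn (fun ξ : ℝ => 2 * C0 * ξ ^ (-(α + 1))) (Ioi 1) :=
      ((integrableOn_Ioi_rpow_iff one_pos).2 (by linarith)).const_mul _
    refine hbase.mono' (hmeas _ measurableSet_Ioi (fun x hx => lt_trans one_pos hx)) ?_
    filter_upwards [ae_restrict_mem measurableSet_Ioi] with ξ hξ
    have hξ0 : (0:ℝ) < ξ := lt_trans one_pos hξ
    have hr : (0:ℝ) ≤ ξ ^ (-(α + 1)) := Real.rpow_nonneg hξ0.le _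
    have hnn : 0 ≤ min (2 * C0) (2 * C1 * ξ) * ξ ^ (-(α + 1)) :=
      mul_nonneg (le_min (by linarith) (by positivity)) hr
    rw [Real.norm_of_nonneg hnn]
    exact mul_le_mul_of_nonneg_right (min_le_left _ _) hr

-- integrability on the product space
lemma prod_integrable (f g : SchwartzMap ℝ ℝ) {α : ℝ} (hα0 : 0 < α) (hα1 : α < 1) :
    Integrable (fun p : ℝ × ℝ => (f (p.1 + p.2) - f (p.1 - p.2)) * p.2 ^ (-(α + 1)) * g p.1)
      ((volume : Measure ℝ).prod (volume.restrict (Ioi (0:ℝ)))) := by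
  obtain ⟨C0, hC00, hC0⟩ := schwartz_bdd f
  obtain ⟨C1, hC10, hC1⟩ := schwartz_lip f
  have hprodeq : (volume : Measure ℝ).prod (volume.restrict (Ioi (0:ℝ)))
      = ((volume : Measure ℝ).prod volume).restrict (univ ×ˢ Ioi 0) := by
    rw [← Measure.prod_restrict, Measure.restrict_univ]
  have hmeas : AEStronglyMeasurable
      (fun p : ℝ × ℝ => (f (p.1 + p.2) - f (p.1 - p.2)) * p.2 ^ (-(α + 1)) * g p.1)
      ((volume : Measure ℝ).prod (volume.restrict (Ioi (0:ℝ)))) := by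
    rw [hprodeq]
    refine ContinuousOn.aestronglyMeasurable (fun p hp => ?_)
      (MeasurableSet.univ.prod measurableSet_Ioi)
    have hp2 : (0:ℝ) < p.2 := hp.2
    refine ContinuousWithinAt.mul (ContinuousWithinAt.mul ?_ ?_) ?_
    · exact ((f.continuous.comp (continuous_fst.add continuous_snd)).sub
        (f.continuous.comp (continuous_fst.sub continuous_snd))).continuousWithinAt
    · exact ((Real.continuousAt_rpow_const p.2 _ (Or.inl hp2.ne')).comp
        continuous_snd.continuousAt).continuousWithinAt
    · exact (g.continuous.comp continuous_fst).continuousWithinAt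
  have hae : ∀ᵐ p : ℝ × ℝ ∂((volume : Measure ℝ).prod (volume.restrict (Ioi (0:ℝ)))), (0:ℝ) < p.2 := by
    rw [hprodeq]
    filter_upwards [ae_restrict_mem (MeasurableSet.univ.prod measurableSet_Ioi)] with p hp
    exact hp.2
  have hdom : Integrable
      (fun p : ℝ × ℝ => ‖g p.1‖ * (min (2 * C0) (2 * C1 * p.2) * p.2 ^ (-(α + 1))))
      ((volume : Measure ℝ).prod (volume.restrict (Ioi (0:ℝ)))) :=
    Integrable.mul_prod g.integrable.norm (phi_integrable hα0 hα1 hC00 hC10)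
  refine hdom.mono' hmeas ?_
  filter_upwards [hae] with p hp
  have hr : (0:ℝ) ≤ p.2 ^ (-(α + 1)) := Real.rpow_nonneg hp.le _
  have hd : ‖f (p.1 + p.2) - f (p.1 - p.2)‖ ≤ min (2 * C0) (2 * C1 * p.2) := by
    refine le_min ?_ ?_
    · calc ‖f (p.1 + p.2) - f (p.1 - p.2)‖ ≤ ‖f (p.1 + p.2)‖ + ‖f (p.1 - p.2)‖ := norm_sub_le _ _
      _ ≤ C0 + C0 := add_le_add (hC0 _) (hC0 _)
      _ = 2 * C0 := by ring
    · calc ‖f (p.1 + p.2) - f (p.1 - p.2)‖ ≤ C1 * ‖(p.1 + p.2) - (p.1 - p.2)‖ := hC1 _ _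
      _ = C1 * ‖2 * p.2‖ := by ring_nf
      _ = C1 * (2 * p.2) := by rw [Real.norm_of_nonneg (by linarith)]
      _ = 2 * C1 * p.2 := by ring
  calc ‖(f (p.1 + p.2) - f (p.1 - p.2)) * p.2 ^ (-(α + 1)) * g p.1‖
      = ‖f (p.1 + p.2) - f (p.1 - p.2)‖ * p.2 ^ (-(α + 1)) * ‖g p.1‖ := by
        rw [norm_mul, norm_mul, Real.norm_of_nonneg hr]
    _ ≤ min (2 * C0) (2 * C1 * p.2) * p.2 ^ (-(α + 1)) * ‖g p.1‖ :=
        mul_le_mul_of_nonneg_right (mul_le_mul_of_nonneg_right hd hr) (norm_nonneg _)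
    _ = ‖g p.1‖ * (min (2 * C0) (2 * C1 * p.2) * p.2 ^ (-(α + 1))) := by ring

-- change of variables in the inner integral
lemma inner_swap (f g : SchwartzMap ℝ ℝ) (ξ : ℝ) :
    ∫ x : ℝ, (f (x + ξ) - f (x - ξ)) * g x
      = -∫ x : ℝ, f x * (g (x + ξ) - g (x - ξ)) := by
  obtain ⟨Cf, _, hCf⟩ := schwartz_bdd f
  obtain ⟨Cg, _, hCg⟩ := schwartz_bdd g
  have hfplus : AEStronglyMeasurable (fun x : ℝ => f (x + ξ)) volume :=
    (f.continuous.comp (continuous_id.add continuous_const)).aestronglyMeasurable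
  have hfminus : AEStronglyMeasurable (fun x : ℝ => f (x - ξ)) volume :=
    (f.continuous.comp (continuous_id.sub continuous_const)).aestronglyMeasurable
  have I1 : Integrable (fun x : ℝ => f (x + ξ) * g x) := by
    exact g.integrable.bdd_mul hfplus (ae_of_all _ fun x => hCf _)
  have I2 : Integrable (fun x : ℝ => f (x - ξ) * g x) := by
    exact g.integrable.bdd_mul hfminus (ae_of_all _ fun x => hCf _)
  have I3 : Integrable (fun x : ℝ => f x * g (x + ξ)) := by
    exact (g.integrable.comp_add_right ξ).bdd_mul f.continuous.aestronglyMeasurable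
      (ae_of_all _ fun x => hCf _)
  have I4 : Integrable (fun x : ℝ => f x * g (x - ξ)) := by
    exact (g.integrable.comp_sub_right ξ).bdd_mul f.continuous.aestronglyMeasurable
      (ae_of_all _ fun x => hCf _)
  have hA : ∫ x : ℝ, f (x + ξ) * g x = ∫ x : ℝ, f x * g (x - ξ) := by
    have := integral_add_right_eq_self (μ := volume) (fun x => f x * g (x - ξ)) ξ
    simpa using this
  have hB : ∫ x : ℝ, f (x - ξ) * g x = ∫ x : ℝ, f x * g (x + ξ) := by
    have := integral_sub_right_eq_self (μ := volume) (fun x => f x * g (x + ξ)) ξ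
    simpa using this
  simp_rw [sub_mul, mul_sub]
  rw [integral_sub I1 I2, integral_sub I3 I4, neg_sub, hA, hB]

lemma inner_eq (f g : SchwartzMap ℝ ℝ) (ξ r : ℝ) :
    ∫ x : ℝ, (f (x + ξ) - f (x - ξ)) * r * g x
      = -∫ x : ℝ, f x * ((g (x + ξ) - g (x - ξ)) * r) := by
  calc ∫ x : ℝ, (f (x + ξ) - f (x - ξ)) * r * g x
      = ∫ x : ℝ, (f (x + ξ) - f (x - ξ)) * g x * r := by simp_rw [mul_right_comm]
    _ = (∫ x : ℝ, (f (x + ξ) - f (x - ξ)) * g x) * r := integral_mul_const _ _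
    _ = (-∫ x : ℝ, f x * (g (x + ξ) - g (x - ξ))) * r := by rw [inner_swap]
    _ = -∫ x : ℝ, f x * ((g (x + ξ) - g (x - ξ)) * r) := by
        rw [neg_mul, ← integral_mul_const]
        simp_rw [mul_assoc]

lemma key_antisym (f g : SchwartzMap ℝ ℝ) {α : ℝ} (hα0 : 0 < α) (hα1 : α < 1) :
    ∫ x : ℝ, (∫ ξ in Set.Ioi (0:ℝ), (f (x + ξ) - f (x - ξ)) * ξ ^ (-(α + 1))) * g x
      = -∫ x : ℝ, f x * ∫ ξ in Set.Ioi (0:ℝ), (g (x + ξ) - g (x - ξ)) * ξ ^ (-(α + 1)) := by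
  have hInt1 : Integrable
      (Function.uncurry fun x ξ : ℝ => (f (x + ξ) - f (x - ξ)) * ξ ^ (-(α + 1)) * g x)
      ((volume : Measure ℝ).prod (volume.restrict (Ioi (0:ℝ)))) := prod_integrable f g hα0 hα1
  have hInt2 : Integrable
      (Function.uncurry fun ξ x : ℝ => f x * ((g (x + ξ) - g (x - ξ)) * ξ ^ (-(α + 1))))
      ((volume.restrict (Ioi (0:ℝ))).prod (volume : Measure ℝ)) := by
    refine ((prod_integrable g f hα0 hα1).swap).congr (ae_of_all _ fun p => ?_)
    simp only [Function.comp, Prod.fst_swap, Prod.snd_swap, Function.uncurry]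
    ring
  calc ∫ x : ℝ, (∫ ξ in Set.Ioi (0:ℝ), (f (x + ξ) - f (x - ξ)) * ξ ^ (-(α + 1))) * g x
      = ∫ x : ℝ, ∫ ξ in Set.Ioi (0:ℝ), (f (x + ξ) - f (x - ξ)) * ξ ^ (-(α + 1)) * g x := by
        simp_rw [← MeasureTheory.integral_mul_const]
    _ = ∫ ξ in Set.Ioi (0:ℝ), ∫ x : ℝ, (f (x + ξ) - f (x - ξ)) * ξ ^ (-(α + 1)) * g x :=
        integral_integral_swap hInt1
    _ = ∫ ξ in Set.Ioi (0:ℝ), -∫ x : ℝ, f x * ((g (x + ξ) - g (x - ξ)) * ξ ^ (-(α + 1))) := by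
        simp_rw [inner_eq]
    _ = -∫ ξ in Set.Ioi (0:ℝ), ∫ x : ℝ, f x * ((g (x + ξ) - g (x - ξ)) * ξ ^ (-(α + 1))) :=
        integral_neg _
    _ = -∫ x : ℝ, ∫ ξ in Set.Ioi (0:ℝ), f x * ((g (x + ξ) - g (x - ξ)) * ξ ^ (-(α + 1))) := by
        rw [integral_integral_swap hInt2]
    _ = -∫ x : ℝ, f x * ∫ ξ in Set.Ioi (0:ℝ), (g (x + ξ) - g (x - ξ)) * ξ ^ (-(α + 1)) := by
        simp_rw [MeasureTheory.integral_const_mul]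

end FracAux

/-- The fractional derivative
`₁D^α f(x) = Γ(1+α) (cos(απ/2)/π) ∫_0^∞ (f(x+ξ) - f(x-ξ)) ξ^{-(α+1)} dξ` is antisymmetric
with respect to the L² pairing: `∫ (₁D^α f) g = -∫ f (₁D^α g)`, for Schwartz `f`, `g` and
`0 < α < 1`. -/
theorem fractional_deriv_one_antisymmetric (f g : SchwartzMap ℝ ℝ) (α : ℝ)
    (hα0 : 0 < α) (hα1 : α < 1) :
    (∫ x : ℝ, (Real.Gamma (1 + α) * (Real.cos (α * π / 2) / π) *
        ∫ ξ in Set.Ioi (0 : ℝ), (f (x + ξ) - f (x - ξ)) * ξ ^ (-(α + 1))) * g x)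
      = -∫ x : ℝ, f x * (Real.Gamma (1 + α) * (Real.cos (α * π / 2) / π) *
        ∫ ξ in Set.Ioi (0 : ℝ), (g (x + ξ) - g (x - ξ)) * ξ ^ (-(α + 1))) := by
  have key := key_antisym f g hα0 hα1
  set A : ℝ := Real.Gamma (1 + α) * (Real.cos (α * π / 2) / π) with hA
  simp_rw [mul_assoc A, mul_left_comm (f _) A]
  rw [MeasureTheory.integral_const_mul, MeasureTheory.integral_const_mul, key, mul_neg]
end
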